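/- arXiv:1904.00161 — 7 statements merged into one kernel-verified Lean document; each statement's English description precedes it below -/
import Mathlib

section
/- Let G be a group and let K and L be subgroups of G. Then the binary Higgins commutator H(K,L) — that is, the image in G, under the homomorphism induced by the subgroup inclusions, of the kernel of the canonical homomorphism from the free product K ∗ L to the direct product K × L — equals the ordinary commutator subgroup ⁅K,L⁆ generated by all elements k*l*k⁻¹*l⁻¹ with k ∈ K, l ∈ L. -/
open Subgroup Monoid
open scoped commutatorElement

private lemma conj_mem_comm {G : Type*} [Group G] (K L : Subgroup G)
    {k : G} (hk : k ∈ K) {x : G} (hx : x ∈ ⁅K, L⁆) : k * x * k⁻¹ ∈ ⁅K, L⁆ := by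
  have h : ⁅K, L⁆ ≤ (⁅K, L⁆).comap (MulAut.conj k).toMonoidHom := by
    rw [Subgroup.commutator_le]
    intro a ha b hb
    have hid : (MulAut.conj k).toMonoidHom ⁅a, b⁆ = ⁅k * a, b⁆ * ⁅k, b⁆⁻¹ := by
      simp only [MulEquiv.coe_toMonoidHom, MulAut.conj_apply, commutatorElement_def]
      group
    rw [Subgroup.mem_comap, hid]
    exact mul_mem (commutator_mem_commutator (mul_mem hk ha) hb)
      (inv_mem (commutator_mem_commutator hk hb))
  simpa using h hx

private lemma le_norm_comm_left {G : Type*} [Group G] (K L : Subgroup G) :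
    K ≤ Subgroup.normalizer (⁅K, L⁆ : Subgroup G) := by
  intro k hk
  rw [Subgroup.mem_normalizer_iff]
  intro h
  constructor
  · exact fun hh => conj_mem_comm K L hk hh
  · intro hh
    have := conj_mem_comm K L (inv_mem hk) hh
    simpa [mul_assoc] using this

private lemma le_norm_comm_right {G : Type*} [Group G] (K L : Subgroup G) :
    L ≤ Subgroup.normalizer (⁅K, L⁆ : Subgroup G) := by
  rw [Subgroup.commutator_comm]
  exact le_norm_comm_left L K

/-- **Binary Higgins commutator of subgroups of a group is the commutator subgroup.**
The image in `G`, under the homomorphism induced by the subgroup inclusions, of the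
kernel of the canonical homomorphism from the free product `K ∗ L` to the direct
product `K × L`, equals `⁅K, L⁆`. -/
theorem binary_higgins_eq_commutator {G : Type*} [Group G] (K L : Subgroup G) :
    Subgroup.map (Monoid.Coprod.lift K.subtype L.subtype)
      (MonoidHom.ker (Monoid.Coprod.lift (MonoidHom.inl ↥K ↥L) (MonoidHom.inr ↥K ↥L))) =
      ⁅K, L⁆ := by
  set φ := Monoid.Coprod.lift K.subtype L.subtype
  set ψ := Monoid.Coprod.lift (MonoidHom.inl ↥K ↥L) (MonoidHom.inr ↥K ↥L)
  apply le_antisymm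
  · -- image of the kernel lies in the commutator subgroup
    set M := Subgroup.normalizer ((⁅K, L⁆ : Subgroup G) : Set G) with hM
    have hK : K ≤ M := le_norm_comm_left K L
    have hL : L ≤ M := le_norm_comm_right K L
    have hNM : ⁅K, L⁆ ≤ M := Subgroup.le_normalizer
    set N' : Subgroup M := (⁅K, L⁆).subgroupOf M with hN'
    haveI : N'.Normal := Subgroup.normal_in_normalizer
    set q : M →* M ⧸ N' := QuotientGroup.mk' N'
    set fK : K →* M := Subgroup.inclusion hK
    set fL : L →* M := Subgroup.inclusion hL
    have comm : ∀ (k : K) (l : L), Commute (q (fK k)) (q (fL l)) := by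
      intro k l
      rw [← commutatorElement_eq_one_iff_commute, ← map_commutatorElement]
      show ((⁅fK k, fL l⁆ : M) : ↥M ⧸ N') = 1
      rw [QuotientGroup.eq_one_iff, hN', Subgroup.mem_subgroupOf]
      have : ((⁅fK k, fL l⁆ : M) : G) = ⁅(k : G), (l : G)⁆ := by
        simp [commutatorElement_def, fK, fL, Subgroup.coe_inclusion]
      rw [this]
      exact commutator_mem_commutator k.2 l.2
    set χ : (K × L) →* M ⧸ N' := MonoidHom.noncommCoprod (q.comp fK) (q.comp fL)
      (fun k l => comm k l)
    set φ' : Monoid.Coprod K L →* M := Monoid.Coprod.lift fK fL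
    have hfact : χ.comp ψ = q.comp φ' := by
      apply Monoid.Coprod.hom_ext <;> ext x <;>
        simp [χ, ψ, φ', Monoid.Coprod.lift_apply_inl, Monoid.Coprod.lift_apply_inr]
    have hφ : ∀ x, φ x = ((φ' x : M) : G) := by
      have : M.subtype.comp φ' = φ := by
        apply Monoid.Coprod.hom_ext <;> ext x <;>
          simp [φ, φ', Subgroup.coe_inclusion, fK, fL]
      intro x; rw [← this]; rfl
    intro y hy
    obtain ⟨x, hx, rfl⟩ := Subgroup.mem_map.mp hy
    have h1 : χ (ψ x) = 1 := by rw [MonoidHom.mem_ker.mp hx, map_one]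
    have h2 : q (φ' x) = 1 := by
      have := congrArg (fun f => f x) hfact
      simpa using this.symm.trans h1
    have h3 : φ' x ∈ N' := (QuotientGroup.eq_one_iff _).mp h2
    rw [hφ x]
    exact (Subgroup.mem_subgroupOf).mp h3
  · -- commutator subgroup lies in the image of the kernel
    rw [Subgroup.commutator_le]
    intro k hk l hl
    refine Subgroup.mem_map.mpr ⟨⁅(Monoid.Coprod.inl (⟨k, hk⟩ : K) : Monoid.Coprod K L), Monoid.Coprod.inr (⟨l, hl⟩ : L)⁆, ?_, ?_⟩
    · rw [MonoidHom.mem_ker, map_commutatorElement]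
      simp only [ψ, Monoid.Coprod.lift_apply_inl, Monoid.Coprod.lift_apply_inr]
      rw [commutatorElement_def]
      ext <;> simp
    · rw [map_commutatorElement]
      simp [φ, Monoid.Coprod.lift_apply_inl, Monoid.Coprod.lift_apply_inr,
        commutatorElement_def]
end

section
/- Let K, L, M be normal subgroups of a group G. Then the ternary Higgins commutator satisfies H(K,L,M) = ⁅⁅K,L⁆,M⁆ ⊔ ⁅⁅M,K⁆,L⁆ as subgroups of G. -/
/-- The homomorphism on the free product `Monoid.CoprodI` of the subgroups `K i`
that is trivial on the `k`-th free factor and the canonical inclusion on every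
other free factor. -/
def piHat {G : Type*} [Group G] {n : ℕ} (K : Fin n → Subgroup G) (k : Fin n) :
    Monoid.CoprodI (fun i => ↥(K i)) →* Monoid.CoprodI (fun i => ↥(K i)) :=
  Monoid.CoprodI.lift
    (fun i => if i = k then 1 else Monoid.CoprodI.of (M := fun i => ↥(K i)) (i := i))

/-- The `n`-fold co-smash product `K₁ ◇ ⋯ ◇ Kₙ` of subgroups of `G`: the
intersection of the kernels of the homomorphisms `piHat K k`. -/
def cosmash {G : Type*} [Group G] {n : ℕ} (K : Fin n → Subgroup G) :
    Subgroup (Monoid.CoprodI (fun i => ↥(K i))) :=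
  ⨅ k, (piHat K k).ker

/-- The `n`-fold Higgins commutator `H(K₁, …, Kₙ)` of subgroups of `G`: the image
of the co-smash product under the homomorphism induced by the subgroup
inclusions. -/
def higgins {G : Type*} [Group G] {n : ℕ} (K : Fin n → Subgroup G) : Subgroup G :=
  (cosmash K).map (Monoid.CoprodI.lift (fun i => (K i).subtype))

namespace ThreeSubAux

open Monoid Subgroup
open scoped commutatorElement

variable {G : Type*} [Group G]

theorem piHat_of_self {n : ℕ} {K : Fin n → Subgroup G} (k : Fin n) (x : ↥(K k)) :
    piHat K k (Monoid.CoprodI.of x) = 1 := by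
  rw [piHat, Monoid.CoprodI.lift_of, if_pos rfl, MonoidHom.one_apply]

theorem piHat_of_ne {n : ℕ} {K : Fin n → Subgroup G} {i k : Fin n} (h : i ≠ k) (x : ↥(K i)) :
    piHat K k (Monoid.CoprodI.of x) = Monoid.CoprodI.of (M := fun i => ↥(K i)) x := by
  rw [piHat, Monoid.CoprodI.lift_of, if_neg h]

theorem cosmash_normal {n : ℕ} {K : Fin n → Subgroup G} : (cosmash K).Normal := by
  constructor
  intro x hx g
  simp only [SetLike.mem_coe, cosmash, Subgroup.mem_iInf] at hx ⊢
  intro k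
  exact ((piHat K k).normal_ker.conj_mem x (hx k) g)


section KLM

variable (K L M N : Subgroup G) [N.Normal]

abbrev fam : Fin 3 → Subgroup G := ![K, L, M]
abbrev PP := Monoid.CoprodI (fun i => ↥(fam K L M i))
abbrev kap : PP K L M →* G := Monoid.CoprodI.lift (fun i => (fam K L M i).subtype)
abbrev of0 (x : ↥K) : PP K L M := Monoid.CoprodI.of (M := fun i => ↥(fam K L M i)) (i := 0) x
abbrev of1 (x : ↥L) : PP K L M := Monoid.CoprodI.of (M := fun i => ↥(fam K L M i)) (i := 1) x
abbrev of2 (x : ↥M) : PP K L M := Monoid.CoprodI.of (M := fun i => ↥(fam K L M i)) (i := 2) x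

variable {K L M}

theorem kap_of0 (x : ↥K) : kap K L M (of0 K L M x) = (x : G) := by
  erw [of0, kap, Monoid.CoprodI.lift_of]; rfl
theorem kap_of1 (x : ↥L) : kap K L M (of1 K L M x) = (x : G) := by
  erw [of1, kap, Monoid.CoprodI.lift_of]; rfl
theorem kap_of2 (x : ↥M) : kap K L M (of2 K L M x) = (x : G) := by
  erw [of2, kap, Monoid.CoprodI.lift_of]; rfl

variable (K L M)

/-- the composite `P → G → G/N`. -/
def phiQ : PP K L M →* G ⧸ N := (QuotientGroup.mk' N).comp (kap K L M)

/-- "delete the `K` letters" -/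
def dKh : PP K L M →* G ⧸ N := (phiQ K L M N).comp (piHat (fam K L M) 0)
def dLh : PP K L M →* G ⧸ N := (phiQ K L M N).comp (piHat (fam K L M) 1)
def dMh : PP K L M →* G ⧸ N := (phiQ K L M N).comp (piHat (fam K L M) 2)
/-- "keep only the `K` letters" -/
def oKh : PP K L M →* G ⧸ N :=
  (phiQ K L M N).comp ((piHat (fam K L M) 2).comp (piHat (fam K L M) 1))
def oLh : PP K L M →* G ⧸ N :=
  (phiQ K L M N).comp ((piHat (fam K L M) 2).comp (piHat (fam K L M) 0))
def oMh : PP K L M →* G ⧸ N :=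
  (phiQ K L M N).comp ((piHat (fam K L M) 1).comp (piHat (fam K L M) 0))

variable {K L M}

-- evaluation of phiQ on letters
theorem phiQ_of0 (x : ↥K) : phiQ K L M N (of0 K L M x) = QuotientGroup.mk' N (x : G) := by
  rw [phiQ, MonoidHom.comp_apply, kap_of0]
  all_goals rfl
theorem phiQ_of1 (x : ↥L) : phiQ K L M N (of1 K L M x) = QuotientGroup.mk' N (x : G) := by
  rw [phiQ, MonoidHom.comp_apply, kap_of1]
  all_goals rfl
theorem phiQ_of2 (x : ↥M) : phiQ K L M N (of2 K L M x) = QuotientGroup.mk' N (x : G) := by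
  rw [phiQ, MonoidHom.comp_apply, kap_of2]

-- evaluation of the six deletion homs on right-appended letters
theorem dKh_of0 (u : PP K L M) (x : ↥K) : dKh K L M N (u * of0 K L M x) = dKh K L M N u := by
  erw [dKh, MonoidHom.comp_apply, map_mul, piHat_of_self, mul_one, MonoidHom.comp_apply]
  all_goals rfl
theorem dLh_of0 (u : PP K L M) (x : ↥K) :
    dLh K L M N (u * of0 K L M x) = dLh K L M N u * QuotientGroup.mk' N (x : G) := by
  erw [dLh, MonoidHom.comp_apply, map_mul, piHat_of_ne (by decide), map_mul,
    MonoidHom.comp_apply]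
  all_goals rfl
theorem dMh_of0 (u : PP K L M) (x : ↥K) :
    dMh K L M N (u * of0 K L M x) = dMh K L M N u * QuotientGroup.mk' N (x : G) := by
  erw [dMh, MonoidHom.comp_apply, map_mul, piHat_of_ne (by decide), map_mul,
    MonoidHom.comp_apply]
  all_goals rfl
theorem oKh_of0 (u : PP K L M) (x : ↥K) :
    oKh K L M N (u * of0 K L M x) = oKh K L M N u * QuotientGroup.mk' N (x : G) := by
  rw [oKh, MonoidHom.comp_apply, MonoidHom.comp_apply]; erw [map_mul, piHat_of_ne (by decide),
    map_mul, piHat_of_ne (by decide), map_mul]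
  all_goals rfl
theorem oLh_of0 (u : PP K L M) (x : ↥K) : oLh K L M N (u * of0 K L M x) = oLh K L M N u := by
  rw [oLh, MonoidHom.comp_apply, MonoidHom.comp_apply]; erw [map_mul, piHat_of_self, mul_one]
  all_goals rfl
theorem oMh_of0 (u : PP K L M) (x : ↥K) : oMh K L M N (u * of0 K L M x) = oMh K L M N u := by
  rw [oMh, MonoidHom.comp_apply, MonoidHom.comp_apply]; erw [map_mul, piHat_of_self, mul_one]
  all_goals rfl

theorem dKh_of1 (u : PP K L M) (x : ↥L) :
    dKh K L M N (u * of1 K L M x) = dKh K L M N u * QuotientGroup.mk' N (x : G) := by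
  erw [dKh, MonoidHom.comp_apply, map_mul, piHat_of_ne (by decide), map_mul,
    MonoidHom.comp_apply]
  all_goals rfl
theorem dLh_of1 (u : PP K L M) (x : ↥L) : dLh K L M N (u * of1 K L M x) = dLh K L M N u := by
  erw [dLh, MonoidHom.comp_apply, map_mul, piHat_of_self, mul_one, MonoidHom.comp_apply]
  all_goals rfl
theorem dMh_of1 (u : PP K L M) (x : ↥L) :
    dMh K L M N (u * of1 K L M x) = dMh K L M N u * QuotientGroup.mk' N (x : G) := by
  erw [dMh, MonoidHom.comp_apply, map_mul, piHat_of_ne (by decide), map_mul,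
    MonoidHom.comp_apply]
  all_goals rfl
theorem oKh_of1 (u : PP K L M) (x : ↥L) : oKh K L M N (u * of1 K L M x) = oKh K L M N u := by
  rw [oKh, MonoidHom.comp_apply, MonoidHom.comp_apply]; erw [map_mul, piHat_of_self, mul_one]
  all_goals rfl
theorem oLh_of1 (u : PP K L M) (x : ↥L) :
    oLh K L M N (u * of1 K L M x) = oLh K L M N u * QuotientGroup.mk' N (x : G) := by
  rw [oLh, MonoidHom.comp_apply, MonoidHom.comp_apply]; erw [map_mul, piHat_of_ne (by decide),
    map_mul, piHat_of_ne (by decide), map_mul]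
  all_goals rfl
theorem oMh_of1 (u : PP K L M) (x : ↥L) : oMh K L M N (u * of1 K L M x) = oMh K L M N u := by
  rw [oMh, MonoidHom.comp_apply, MonoidHom.comp_apply]; erw [map_mul, piHat_of_ne (by decide),
    map_mul, piHat_of_self, mul_one]
  all_goals rfl

theorem dKh_of2 (u : PP K L M) (x : ↥M) :
    dKh K L M N (u * of2 K L M x) = dKh K L M N u * QuotientGroup.mk' N (x : G) := by
  erw [dKh, MonoidHom.comp_apply, map_mul, piHat_of_ne (by decide), map_mul,
    MonoidHom.comp_apply]
  all_goals rfl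
theorem dLh_of2 (u : PP K L M) (x : ↥M) :
    dLh K L M N (u * of2 K L M x) = dLh K L M N u * QuotientGroup.mk' N (x : G) := by
  erw [dLh, MonoidHom.comp_apply, map_mul, piHat_of_ne (by decide), map_mul,
    MonoidHom.comp_apply]
  all_goals rfl
theorem dMh_of2 (u : PP K L M) (x : ↥M) : dMh K L M N (u * of2 K L M x) = dMh K L M N u := by
  erw [dMh, MonoidHom.comp_apply, map_mul, piHat_of_self, mul_one, MonoidHom.comp_apply]
  all_goals rfl
theorem oKh_of2 (u : PP K L M) (x : ↥M) : oKh K L M N (u * of2 K L M x) = oKh K L M N u := by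
  rw [oKh, MonoidHom.comp_apply, MonoidHom.comp_apply]; erw [map_mul, piHat_of_ne (by decide),
    map_mul, piHat_of_self, mul_one]
  all_goals rfl
theorem oLh_of2 (u : PP K L M) (x : ↥M) : oLh K L M N (u * of2 K L M x) = oLh K L M N u := by
  rw [oLh, MonoidHom.comp_apply, MonoidHom.comp_apply]; erw [map_mul, piHat_of_ne (by decide),
    map_mul, piHat_of_self, mul_one]
  all_goals rfl
theorem oMh_of2 (u : PP K L M) (x : ↥M) :
    oMh K L M N (u * of2 K L M x) = oMh K L M N u * QuotientGroup.mk' N (x : G) := by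
  rw [oMh, MonoidHom.comp_apply, MonoidHom.comp_apply]; erw [map_mul, piHat_of_ne (by decide),
    map_mul, piHat_of_ne (by decide), map_mul]
  all_goals rfl

theorem tripleComm_mem_higgins_KLM {k l m : G} (hk : k ∈ K) (hl : l ∈ L) (hm : m ∈ M) :
    ⁅(⁅k, l⁆ : G), m⁆ ∈ higgins ![K, L, M] := by
  refine ⟨⁅⁅of0 K L M ⟨k, hk⟩, of1 K L M ⟨l, hl⟩⁆, of2 K L M ⟨m, hm⟩⁆, ?_, ?_⟩
  · simp only [SetLike.mem_coe, cosmash, Subgroup.mem_iInf]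
    intro j
    rw [MonoidHom.mem_ker, map_commutatorElement, map_commutatorElement]
    fin_cases j
    · show ⁅⁅(piHat ![K,L,M] 0) (of0 K L M ⟨k, hk⟩), (piHat ![K,L,M] 0) (of1 K L M ⟨l, hl⟩)⁆,
        (piHat ![K,L,M] 0) (of2 K L M ⟨m, hm⟩)⁆ = 1
      erw [piHat_of_self, commutatorElement_one_left, commutatorElement_one_left]
    · show ⁅⁅(piHat ![K,L,M] 1) (of0 K L M ⟨k, hk⟩), (piHat ![K,L,M] 1) (of1 K L M ⟨l, hl⟩)⁆,
        (piHat ![K,L,M] 1) (of2 K L M ⟨m, hm⟩)⁆ = 1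
      erw [piHat_of_self, commutatorElement_one_right, commutatorElement_one_left]
    · show ⁅⁅(piHat ![K,L,M] 2) (of0 K L M ⟨k, hk⟩), (piHat ![K,L,M] 2) (of1 K L M ⟨l, hl⟩)⁆,
        (piHat ![K,L,M] 2) (of2 K L M ⟨m, hm⟩)⁆ = 1
      erw [piHat_of_self, commutatorElement_one_right]
  · rw [map_commutatorElement, map_commutatorElement, kap_of0, kap_of1, kap_of2]

theorem tripleComm_mem_higgins_MKL {k l m : G} (hk : k ∈ K) (hl : l ∈ L) (hm : m ∈ M) :
    ⁅(⁅m, k⁆ : G), l⁆ ∈ higgins ![K, L, M] := by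
  refine ⟨⁅⁅of2 K L M ⟨m, hm⟩, of0 K L M ⟨k, hk⟩⁆, of1 K L M ⟨l, hl⟩⁆, ?_, ?_⟩
  · simp only [SetLike.mem_coe, cosmash, Subgroup.mem_iInf]
    intro j
    rw [MonoidHom.mem_ker, map_commutatorElement, map_commutatorElement]
    fin_cases j
    · show ⁅⁅(piHat ![K,L,M] 0) (of2 K L M ⟨m, hm⟩), (piHat ![K,L,M] 0) (of0 K L M ⟨k, hk⟩)⁆,
        (piHat ![K,L,M] 0) (of1 K L M ⟨l, hl⟩)⁆ = 1
      erw [piHat_of_self, commutatorElement_one_right, commutatorElement_one_left]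
    · show ⁅⁅(piHat ![K,L,M] 1) (of2 K L M ⟨m, hm⟩), (piHat ![K,L,M] 1) (of0 K L M ⟨k, hk⟩)⁆,
        (piHat ![K,L,M] 1) (of1 K L M ⟨l, hl⟩)⁆ = 1
      erw [piHat_of_self, commutatorElement_one_right]
    · show ⁅⁅(piHat ![K,L,M] 2) (of2 K L M ⟨m, hm⟩), (piHat ![K,L,M] 2) (of0 K L M ⟨k, hk⟩)⁆,
        (piHat ![K,L,M] 2) (of1 K L M ⟨l, hl⟩)⁆ = 1
      erw [piHat_of_self, commutatorElement_one_left, commutatorElement_one_left]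
  · rw [map_commutatorElement, map_commutatorElement, kap_of2, kap_of0, kap_of1]

theorem conj_mem_higgins_of_factor (i : Fin 3) (g : ↥((fam K L M) i)) {x : G}
    (hx : x ∈ higgins ![K, L, M]) :
    (g : G) * x * (g : G)⁻¹ ∈ higgins ![K, L, M] := by
  obtain ⟨w, hw, rfl⟩ := hx
  refine ⟨Monoid.CoprodI.of (M := fun i => ↥(fam K L M i)) g * w *
    (Monoid.CoprodI.of (M := fun i => ↥(fam K L M i)) g)⁻¹,
    cosmash_normal.conj_mem w hw _, ?_⟩
  rw [map_mul, map_mul, map_inv, Monoid.CoprodI.lift_of]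
  rfl

theorem sup_le_normalizer : K ⊔ L ⊔ M ≤ Subgroup.normalizer (higgins ![K, L, M] : Set G) := by
  have key : ∀ (i : Fin 3) (g : G) (hg : g ∈ fam K L M i), g ∈ Subgroup.normalizer (higgins ![K, L, M] : Set G) := by
    intro i g hg
    rw [Subgroup.mem_normalizer_iff]
    intro h
    constructor
    · intro hh
      exact conj_mem_higgins_of_factor i ⟨g, hg⟩ hh
    · intro hh
      have := conj_mem_higgins_of_factor i (⟨g, hg⟩ : ↥(fam K L M i))⁻¹ hh
      simpa [mul_assoc] using this
  refine sup_le (sup_le ?_ ?_) ?_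
  · exact fun g hg => key 0 g hg
  · exact fun g hg => key 1 g hg
  · exact fun g hg => key 2 g hg


end KLM

end ThreeSubAux

namespace ThreeSubAux
open Monoid Subgroup
open scoped commutatorElement
variable {G : Type*} [Group G]

theorem swap_prefix {Q : Type*} [Group Q] {u v : Q} (h : u * v = v * u) (X : Q) :
    X * u * v = X * v * u := by rw [mul_assoc, h, ← mul_assoc]

theorem key_calc {Q : Type*} [Group Q] {A B C : Subgroup Q}
    (hAn : A.Normal) (hBn : B.Normal) (hCn : C.Normal)
    (hABC : ∀ x ∈ ⁅A, B⁆, ∀ y ∈ C, x * y = y * x)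
    (hBCA : ∀ x ∈ ⁅B, C⁆, ∀ y ∈ A, x * y = y * x)
    (hACB : ∀ x ∈ ⁅A, C⁆, ∀ y ∈ B, x * y = y * x)
    {a b c d e γ : Q} (B₀ : Q) (ha : a ∈ A) (hb : b ∈ B) (hc : c ∈ C)
    (hd : d ∈ ⁅A, B⁆) (he : e ∈ ⁅B, C⁆) (hγ : γ ∈ C) :
    B₀ * γ * a⁻¹ * (c * γ)⁻¹ * (b * c * e * γ) * b⁻¹ * (a * b * d) =
      B₀ * a⁻¹ * c⁻¹ * (b * c * e) * b⁻¹ * (a * b * d) * γ := by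
  -- memberships of the derived commutator-type elements
  have hpAC : a * γ * a⁻¹ * γ⁻¹ ∈ ⁅A, C⁆ := by
    have := Subgroup.commutator_mem_commutator ha hγ
    rwa [commutatorElement_def] at this
  have hpA : a * γ * a⁻¹ * γ⁻¹ ∈ A := by
    have h1 : γ * a⁻¹ * γ⁻¹ ∈ A := hAn.conj_mem a⁻¹ (inv_mem ha) γ
    have : a * γ * a⁻¹ * γ⁻¹ = a * (γ * a⁻¹ * γ⁻¹) := by group
    rw [this]; exact mul_mem ha h1
  have hqBC : γ⁻¹ * b * γ * b⁻¹ ∈ ⁅B, C⁆ := by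
    have := Subgroup.commutator_mem_commutator (inv_mem hγ) hb
    rw [commutatorElement_def, inv_inv] at this
    rwa [Subgroup.commutator_comm] at this
  have hp2AC : γ⁻¹ * a⁻¹ * γ * a ∈ ⁅A, C⁆ := by
    have := Subgroup.commutator_mem_commutator (inv_mem hγ) (inv_mem ha)
    rw [commutatorElement_def, inv_inv, inv_inv] at this
    rwa [Subgroup.commutator_comm] at this
  have hp2A : γ⁻¹ * a⁻¹ * γ * a ∈ A := by
    have h1 : γ⁻¹ * a⁻¹ * γ ∈ A := by
      have := hAn.conj_mem a⁻¹ (inv_mem ha) γ⁻¹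
      rwa [inv_inv] at this
    have : γ⁻¹ * a⁻¹ * γ * a = (γ⁻¹ * a⁻¹ * γ) * a := by group
    rw [this]; exact mul_mem h1 ha
  have hp2C : γ⁻¹ * a⁻¹ * γ * a ∈ C := by
    have h1 : a⁻¹ * γ * a ∈ C := by
      have := hCn.conj_mem γ hγ a⁻¹
      rwa [inv_inv] at this
    have : γ⁻¹ * a⁻¹ * γ * a = γ⁻¹ * (a⁻¹ * γ * a) := by group
    rw [this]; exact mul_mem (inv_mem hγ) h1
  have hq3BC : γ⁻¹ * b⁻¹ * γ * b ∈ ⁅B, C⁆ := by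
    have := Subgroup.commutator_mem_commutator (inv_mem hγ) (inv_mem hb)
    rw [commutatorElement_def, inv_inv, inv_inv] at this
    rwa [Subgroup.commutator_comm] at this
  have hrAC : γ * a⁻¹ * γ⁻¹ * a ∈ ⁅A, C⁆ := by
    have := Subgroup.commutator_mem_commutator hγ (inv_mem ha)
    rw [commutatorElement_def, inv_inv] at this
    rwa [Subgroup.commutator_comm] at this
  have hrC : γ * a⁻¹ * γ⁻¹ * a ∈ C := by
    have h1 : a⁻¹ * γ⁻¹ * a ∈ C := by
      have := hCn.conj_mem γ⁻¹ (inv_mem hγ) a⁻¹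
      rwa [inv_inv] at this
    have : γ * a⁻¹ * γ⁻¹ * a = γ * (a⁻¹ * γ⁻¹ * a) := by group
    rw [this]; exact mul_mem hγ h1
  have hcbcB : c⁻¹ * b * c ∈ B := by
    have := hBn.conj_mem b hb c⁻¹
    rwa [inv_inv] at this
  -- the commute facts
  have cqa : (γ⁻¹ * b * γ * b⁻¹) * a = a * (γ⁻¹ * b * γ * b⁻¹) := hBCA _ hqBC a ha
  have cp2b : (γ⁻¹ * a⁻¹ * γ * a) * b = b * (γ⁻¹ * a⁻¹ * γ * a) := hACB _ hp2AC b hb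
  have cq3p2 : (γ⁻¹ * b⁻¹ * γ * b) * (γ⁻¹ * a⁻¹ * γ * a) =
      (γ⁻¹ * a⁻¹ * γ * a) * (γ⁻¹ * b⁻¹ * γ * b) := hBCA _ hq3BC _ hp2A
  have cp2d : (γ⁻¹ * a⁻¹ * γ * a) * d = d * (γ⁻¹ * a⁻¹ * γ * a) := (hABC d hd _ hp2C).symm
  have cgd : γ * d = d * γ := (hABC d hd γ hγ).symm
  have cpX : (a * γ * a⁻¹ * γ⁻¹) * (c⁻¹ * b * c) = (c⁻¹ * b * c) * (a * γ * a⁻¹ * γ⁻¹) :=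
    hACB _ hpAC _ hcbcB
  have cpe : (a * γ * a⁻¹ * γ⁻¹) * e = e * (a * γ * a⁻¹ * γ⁻¹) := (hBCA e he _ hpA).symm
  have cpb : (a * γ * a⁻¹ * γ⁻¹) * b⁻¹ = b⁻¹ * (a * γ * a⁻¹ * γ⁻¹) := hACB _ hpAC b⁻¹ (inv_mem hb)
  have crb : (γ * a⁻¹ * γ⁻¹ * a) * b = b * (γ * a⁻¹ * γ⁻¹ * a) := hACB _ hrAC b hb
  have crd : (γ * a⁻¹ * γ⁻¹ * a) * d = d * (γ * a⁻¹ * γ⁻¹ * a) := (hABC d hd _ hrC).symm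
  calc
    B₀ * γ * a⁻¹ * (c * γ)⁻¹ * (b * c * e * γ) * b⁻¹ * (a * b * d)
      = B₀ * a⁻¹ * (a * γ * a⁻¹ * γ⁻¹) * c⁻¹ * b * c * e * γ * b⁻¹ * a * b * d := by group
    _ = B₀ * a⁻¹ * (a * γ * a⁻¹ * γ⁻¹) * c⁻¹ * b * c * e * b⁻¹ * γ *
        (γ⁻¹ * b * γ * b⁻¹) * a * b * d := by group
    _ = B₀ * a⁻¹ * (a * γ * a⁻¹ * γ⁻¹) * c⁻¹ * b * c * e * b⁻¹ * γ * a *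
        (γ⁻¹ * b * γ * b⁻¹) * b * d := by rw [swap_prefix cqa]
    _ = B₀ * a⁻¹ * (a * γ * a⁻¹ * γ⁻¹) * c⁻¹ * b * c * e * b⁻¹ * a * γ *
        (γ⁻¹ * a⁻¹ * γ * a) * (γ⁻¹ * b * γ * b⁻¹) * b * d := by group
    _ = B₀ * a⁻¹ * (a * γ * a⁻¹ * γ⁻¹) * c⁻¹ * b * c * e * b⁻¹ * a * γ *
        (γ⁻¹ * a⁻¹ * γ * a) * b * (b⁻¹ * γ⁻¹ * b * γ) * d := by group
    _ = B₀ * a⁻¹ * (a * γ * a⁻¹ * γ⁻¹) * c⁻¹ * b * c * e * b⁻¹ * a * γ * b *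
        (γ⁻¹ * a⁻¹ * γ * a) * (b⁻¹ * γ⁻¹ * b * γ) * d := by rw [swap_prefix cp2b]
    _ = B₀ * a⁻¹ * (a * γ * a⁻¹ * γ⁻¹) * c⁻¹ * b * c * e * b⁻¹ * a * b * γ *
        (γ⁻¹ * b⁻¹ * γ * b) * (γ⁻¹ * a⁻¹ * γ * a) * (b⁻¹ * γ⁻¹ * b * γ) * d := by group
    _ = B₀ * a⁻¹ * (a * γ * a⁻¹ * γ⁻¹) * c⁻¹ * b * c * e * b⁻¹ * a * b * γ *
        (γ⁻¹ * a⁻¹ * γ * a) * (γ⁻¹ * b⁻¹ * γ * b) * (b⁻¹ * γ⁻¹ * b * γ) * d := by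
          rw [swap_prefix cq3p2]
    _ = B₀ * a⁻¹ * (a * γ * a⁻¹ * γ⁻¹) * c⁻¹ * b * c * e * b⁻¹ * a * b * γ *
        (γ⁻¹ * a⁻¹ * γ * a) * d := by group
    _ = B₀ * a⁻¹ * (a * γ * a⁻¹ * γ⁻¹) * c⁻¹ * b * c * e * b⁻¹ * a * b * γ * d *
        (γ⁻¹ * a⁻¹ * γ * a) := by rw [swap_prefix cp2d]
    _ = B₀ * a⁻¹ * (a * γ * a⁻¹ * γ⁻¹) * c⁻¹ * b * c * e * b⁻¹ * a * b * d * γ *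
        (γ⁻¹ * a⁻¹ * γ * a) := by rw [swap_prefix cgd]
    _ = B₀ * a⁻¹ * (a * γ * a⁻¹ * γ⁻¹) * (c⁻¹ * b * c) * e * b⁻¹ * a * b * d * γ *
        (γ⁻¹ * a⁻¹ * γ * a) := by group
    _ = B₀ * a⁻¹ * (c⁻¹ * b * c) * (a * γ * a⁻¹ * γ⁻¹) * e * b⁻¹ * a * b * d * γ *
        (γ⁻¹ * a⁻¹ * γ * a) := by rw [swap_prefix cpX]
    _ = B₀ * a⁻¹ * (c⁻¹ * b * c) * e * (a * γ * a⁻¹ * γ⁻¹) * b⁻¹ * a * b * d * γ *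
        (γ⁻¹ * a⁻¹ * γ * a) := by rw [swap_prefix cpe]
    _ = B₀ * a⁻¹ * (c⁻¹ * b * c) * e * b⁻¹ * (a * γ * a⁻¹ * γ⁻¹) * a * b * d * γ *
        (γ⁻¹ * a⁻¹ * γ * a) := by rw [swap_prefix cpb]
    _ = B₀ * a⁻¹ * (c⁻¹ * b * c) * e * b⁻¹ * a * (γ * a⁻¹ * γ⁻¹ * a) * b * d * γ *
        (γ⁻¹ * a⁻¹ * γ * a) := by group
    _ = B₀ * a⁻¹ * (c⁻¹ * b * c) * e * b⁻¹ * a * b * (γ * a⁻¹ * γ⁻¹ * a) * d * γ *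
        (γ⁻¹ * a⁻¹ * γ * a) := by rw [swap_prefix crb]
    _ = B₀ * a⁻¹ * (c⁻¹ * b * c) * e * b⁻¹ * a * b * d * (γ * a⁻¹ * γ⁻¹ * a) * γ *
        (γ⁻¹ * a⁻¹ * γ * a) := by rw [swap_prefix crd]
    _ = B₀ * a⁻¹ * c⁻¹ * (b * c * e) * b⁻¹ * (a * b * d) * γ := by group


section Main

variable (K L M N : Subgroup G) [N.Normal]

def Pred (w : PP K L M) : Prop :=
  phiQ K L M N w =
    dLh K L M N w * (oKh K L M N w)⁻¹ * (oMh K L M N w)⁻¹ * dKh K L M N w *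
      (oLh K L M N w)⁻¹ * dMh K L M N w
  ∧ oKh K L M N w ∈ K.map (QuotientGroup.mk' N)
  ∧ oLh K L M N w ∈ L.map (QuotientGroup.mk' N)
  ∧ oMh K L M N w ∈ M.map (QuotientGroup.mk' N)
  ∧ (∃ d ∈ ⁅K.map (QuotientGroup.mk' N), L.map (QuotientGroup.mk' N)⁆,
      dMh K L M N w = oKh K L M N w * oLh K L M N w * d)
  ∧ (∃ e ∈ ⁅L.map (QuotientGroup.mk' N), M.map (QuotientGroup.mk' N)⁆,
      dKh K L M N w = oLh K L M N w * oMh K L M N w * e)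

variable {K L M N}

theorem pred_one : Pred K L M N 1 := by
  refine ⟨?_, ?_, ?_, ?_, ⟨1, one_mem _, ?_⟩, ⟨1, one_mem _, ?_⟩⟩
  · simp only [map_one]; group
  · simp only [map_one]; exact one_mem _
  · simp only [map_one]; exact one_mem _
  · simp only [map_one]; exact one_mem _
  · simp only [map_one]; group
  · simp only [map_one]; group

theorem pred_step0 (hK : K.Normal) (hL : L.Normal) (x : ↥K) (u : PP K L M)
    (hu : Pred K L M N u) : Pred K L M N (u * of0 K L M x) := by
  haveI : (K.map (QuotientGroup.mk' N)).Normal := hK.map _ (QuotientGroup.mk'_surjective N)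
  haveI : (L.map (QuotientGroup.mk' N)).Normal := hL.map _ (QuotientGroup.mk'_surjective N)
  obtain ⟨hF, hka, hlb, hmc, ⟨d, hd, hCd⟩, ⟨e, he, hAe⟩⟩ := hu
  have hα : QuotientGroup.mk' N (x : G) ∈ K.map (QuotientGroup.mk' N) := ⟨x, x.2, rfl⟩
  refine ⟨?_, ?_, ?_, ?_, ?_, ?_⟩
  · rw [map_mul, phiQ_of0, hF, dLh_of0, oKh_of0, oMh_of0, dKh_of0, oLh_of0, dMh_of0]
    group
  · rw [oKh_of0]; exact mul_mem hka hα
  · rw [oLh_of0]; exact hlb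
  · rw [oMh_of0]; exact hmc
  · refine ⟨(oLh K L M N u)⁻¹ * (QuotientGroup.mk' N (x : G))⁻¹ * oLh K L M N u *
        QuotientGroup.mk' N (x : G) *
        ((QuotientGroup.mk' N (x : G))⁻¹ * d * QuotientGroup.mk' N (x : G)), ?_, ?_⟩
    · refine mul_mem ?_ ?_
      · have := Subgroup.commutator_mem_commutator (inv_mem hlb) (inv_mem hα)
        rw [commutatorElement_def, inv_inv, inv_inv] at this
        rwa [Subgroup.commutator_comm] at this
      · have := (Subgroup.commutator_normal _ _).conj_mem d hd
          (QuotientGroup.mk' N (x : G))⁻¹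
        rwa [inv_inv] at this
    · rw [dMh_of0, oKh_of0, oLh_of0, hCd]
      group
  · refine ⟨e, he, ?_⟩
    rw [dKh_of0, oLh_of0, oMh_of0]
    exact hAe

theorem pred_step1 (hK : K.Normal) (hL : L.Normal) (hM : M.Normal) (x : ↥L) (u : PP K L M)
    (hu : Pred K L M N u) : Pred K L M N (u * of1 K L M x) := by
  haveI : (K.map (QuotientGroup.mk' N)).Normal := hK.map _ (QuotientGroup.mk'_surjective N)
  haveI : (L.map (QuotientGroup.mk' N)).Normal := hL.map _ (QuotientGroup.mk'_surjective N)
  haveI : (M.map (QuotientGroup.mk' N)).Normal := hM.map _ (QuotientGroup.mk'_surjective N)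
  obtain ⟨hF, hka, hlb, hmc, ⟨d, hd, hCd⟩, ⟨e, he, hAe⟩⟩ := hu
  have hβ : QuotientGroup.mk' N (x : G) ∈ L.map (QuotientGroup.mk' N) := ⟨x, x.2, rfl⟩
  refine ⟨?_, ?_, ?_, ?_, ?_, ?_⟩
  · rw [map_mul, phiQ_of1, hF, dLh_of1, oKh_of1, oMh_of1, dKh_of1, oLh_of1, dMh_of1]
    group
  · rw [oKh_of1]; exact hka
  · rw [oLh_of1]; exact mul_mem hlb hβ
  · rw [oMh_of1]; exact hmc
  · refine ⟨(QuotientGroup.mk' N (x : G))⁻¹ * d * QuotientGroup.mk' N (x : G), ?_, ?_⟩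
    · have := (Subgroup.commutator_normal _ _).conj_mem d hd (QuotientGroup.mk' N (x : G))⁻¹
      rwa [inv_inv] at this
    · rw [dMh_of1, oKh_of1, oLh_of1, hCd]
      group
  · refine ⟨(oMh K L M N u)⁻¹ * (QuotientGroup.mk' N (x : G))⁻¹ * oMh K L M N u *
        QuotientGroup.mk' N (x : G) *
        ((QuotientGroup.mk' N (x : G))⁻¹ * e * QuotientGroup.mk' N (x : G)), ?_, ?_⟩
    · refine mul_mem ?_ ?_
      · have := Subgroup.commutator_mem_commutator (inv_mem hmc) (inv_mem hβ)
        rw [commutatorElement_def, inv_inv, inv_inv] at this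
        rwa [Subgroup.commutator_comm] at this
      · have := (Subgroup.commutator_normal _ _).conj_mem e he
          (QuotientGroup.mk' N (x : G))⁻¹
        rwa [inv_inv] at this
    · rw [dKh_of1, oLh_of1, oMh_of1, hAe]
      group

theorem pred_step2 (hK : K.Normal) (hL : L.Normal) (hM : M.Normal)
    (hABC : ∀ x ∈ ⁅K.map (QuotientGroup.mk' N), L.map (QuotientGroup.mk' N)⁆,
      ∀ y ∈ M.map (QuotientGroup.mk' N), x * y = y * x)
    (hBCA : ∀ x ∈ ⁅L.map (QuotientGroup.mk' N), M.map (QuotientGroup.mk' N)⁆,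
      ∀ y ∈ K.map (QuotientGroup.mk' N), x * y = y * x)
    (hACB : ∀ x ∈ ⁅K.map (QuotientGroup.mk' N), M.map (QuotientGroup.mk' N)⁆,
      ∀ y ∈ L.map (QuotientGroup.mk' N), x * y = y * x)
    (x : ↥M) (u : PP K L M)
    (hu : Pred K L M N u) : Pred K L M N (u * of2 K L M x) := by
  haveI hAn : (K.map (QuotientGroup.mk' N)).Normal := hK.map _ (QuotientGroup.mk'_surjective N)
  haveI hBn : (L.map (QuotientGroup.mk' N)).Normal := hL.map _ (QuotientGroup.mk'_surjective N)
  haveI hCn : (M.map (QuotientGroup.mk' N)).Normal := hM.map _ (QuotientGroup.mk'_surjective N)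
  obtain ⟨hF, hka, hlb, hmc, ⟨d, hd, hCd⟩, ⟨e, he, hAe⟩⟩ := hu
  have hγ : QuotientGroup.mk' N (x : G) ∈ M.map (QuotientGroup.mk' N) := ⟨x, x.2, rfl⟩
  refine ⟨?_, ?_, ?_, ?_, ?_, ?_⟩
  · rw [map_mul, phiQ_of2, hF, dLh_of2, oKh_of2, oMh_of2, dKh_of2, oLh_of2, dMh_of2,
      hAe, hCd]
    exact (key_calc hAn hBn hCn hABC hBCA hACB (dLh K L M N u) hka hlb hmc hd he hγ).symm
  · rw [oKh_of2]; exact hka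
  · rw [oLh_of2]; exact hlb
  · rw [oMh_of2]; exact mul_mem hmc hγ
  · refine ⟨d, hd, ?_⟩
    rw [dMh_of2, oKh_of2, oLh_of2]
    exact hCd
  · refine ⟨(QuotientGroup.mk' N (x : G))⁻¹ * e * QuotientGroup.mk' N (x : G), ?_, ?_⟩
    · have := (Subgroup.commutator_normal _ _).conj_mem e he (QuotientGroup.mk' N (x : G))⁻¹
      rwa [inv_inv] at this
    · rw [dKh_of2, oLh_of2, oMh_of2, hAe]
      group

end Main

end ThreeSubAux

namespace ThreeSubAux
open Monoid Subgroup
open scoped commutatorElement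
variable {G : Type*} [Group G]

section Main2
variable {K L M N : Subgroup G} [N.Normal]

theorem pred_all (hK : K.Normal) (hL : L.Normal) (hM : M.Normal)
    (hABC : ∀ x ∈ ⁅K.map (QuotientGroup.mk' N), L.map (QuotientGroup.mk' N)⁆,
      ∀ y ∈ M.map (QuotientGroup.mk' N), x * y = y * x)
    (hBCA : ∀ x ∈ ⁅L.map (QuotientGroup.mk' N), M.map (QuotientGroup.mk' N)⁆,
      ∀ y ∈ K.map (QuotientGroup.mk' N), x * y = y * x)
    (hACB : ∀ x ∈ ⁅K.map (QuotientGroup.mk' N), M.map (QuotientGroup.mk' N)⁆,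
      ∀ y ∈ L.map (QuotientGroup.mk' N), x * y = y * x)
    (w : PP K L M) : Pred K L M N w := by
  have step : ∀ w u : PP K L M, Pred K L M N u → Pred K L M N (u * w) := by
    intro w
    induction w using Monoid.CoprodI.induction_on with
    | one => intro u hu; rwa [mul_one]
    | of i x =>
      fin_cases i
      · exact fun u hu => pred_step0 hK hL x u hu
      · exact fun u hu => pred_step1 hK hL hM x u hu
      · exact fun u hu => pred_step2 hK hL hM hABC hBCA hACB x u hu
    | mul y z hy hz => intro u hu; rw [← mul_assoc]; exact hz _ (hy _ hu)
  have := step w 1 pred_one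
  rwa [one_mul] at this

end Main2

theorem higgins_le_sup {K L M : Subgroup G} (hK : K.Normal) (hL : L.Normal) (hM : M.Normal) :
    higgins ![K, L, M] ≤ ⁅⁅K, L⁆, M⁆ ⊔ ⁅⁅M, K⁆, L⁆ := by
  haveI := hK; haveI := hL; haveI := hM
  set N : Subgroup G := ⁅⁅K, L⁆, M⁆ ⊔ ⁅⁅M, K⁆, L⁆ with hNdef
  haveI hNn : N.Normal := Subgroup.sup_normal _ _
  have h1 : ⁅⁅K.map (QuotientGroup.mk' N), L.map (QuotientGroup.mk' N)⁆,
      M.map (QuotientGroup.mk' N)⁆ = ⊥ := by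
    rw [← Subgroup.map_commutator, ← Subgroup.map_commutator, Subgroup.map_eq_bot_iff,
      QuotientGroup.ker_mk']
    exact le_sup_left
  have h2 : ⁅⁅M.map (QuotientGroup.mk' N), K.map (QuotientGroup.mk' N)⁆,
      L.map (QuotientGroup.mk' N)⁆ = ⊥ := by
    rw [← Subgroup.map_commutator, ← Subgroup.map_commutator, Subgroup.map_eq_bot_iff,
      QuotientGroup.ker_mk']
    exact le_sup_right
  have h3 : ⁅⁅L.map (QuotientGroup.mk' N), M.map (QuotientGroup.mk' N)⁆,
      K.map (QuotientGroup.mk' N)⁆ = ⊥ :=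
    Subgroup.commutator_commutator_eq_bot_of_rotate h2 h1
  have comm_of_bot : ∀ {X Y : Subgroup (G ⧸ N)}, ⁅X, Y⁆ = ⊥ →
      ∀ x ∈ X, ∀ y ∈ Y, x * y = y * x := by
    intro X Y hXY x hx y hy
    have h : ⁅x, y⁆ = 1 := by
      have := Subgroup.commutator_mem_commutator hx hy
      rwa [hXY, Subgroup.mem_bot] at this
    exact commutatorElement_eq_one_iff_mul_comm.mp h
  have hABC := fun x hx y hy => comm_of_bot h1 x hx y hy
  have hBCA := fun x hx y hy => comm_of_bot h3 x hx y hy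
  have hACB : ∀ x ∈ ⁅K.map (QuotientGroup.mk' N), M.map (QuotientGroup.mk' N)⁆,
      ∀ y ∈ L.map (QuotientGroup.mk' N), x * y = y * x := by
    intro x hx y hy
    rw [Subgroup.commutator_comm] at hx
    exact comm_of_bot h2 x hx y hy
  rintro g ⟨w, hw, rfl⟩
  obtain ⟨hF, -, -, -, -, -⟩ := pred_all hK hL hM hABC hBCA hACB w
  have hw' : ∀ k : Fin 3, w ∈ (piHat ![K, L, M] k).ker := by
    have hmem : w ∈ (⨅ k, (piHat ![K, L, M] k).ker : Subgroup _) := hw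
    rwa [Subgroup.mem_iInf] at hmem
  have hker : ∀ k : Fin 3, piHat (fam K L M) k w = 1 := fun k =>
    MonoidHom.mem_ker.mp (hw' k)
  have hφ : phiQ K L M N w = 1 := by
    rw [hF, dLh, dKh, dMh, oKh, oLh, oMh]
    simp only [MonoidHom.comp_apply, hker 0, hker 1, hker 2, map_one, one_mul, mul_one,
      inv_one]
  rw [phiQ, MonoidHom.comp_apply] at hφ
  exact (QuotientGroup.eq_one_iff _).mp hφ


theorem commutator_closure_le {H S Y : Subgroup G} {T : Set G}
    (hTS : T ⊆ (S : Set G))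
    (hconj : ∀ g ∈ S, ∀ x ∈ H, g * x * g⁻¹ ∈ H)
    (hgen : ∀ t ∈ T, ∀ y ∈ Y, ⁅t, y⁆ ∈ H) :
    ⁅Subgroup.closure T, Y⁆ ≤ H := by
  rw [Subgroup.commutator_le]
  intro d hd y hy
  refine (Subgroup.closure_induction
    (p := fun d _ => d ∈ S ∧ ∀ y ∈ Y, ⁅d, y⁆ ∈ H) ?_ ?_ ?_ ?_ hd).2 y hy
  · exact fun x hx => ⟨hTS hx, fun y hy => hgen x hx y hy⟩
  · exact ⟨one_mem _, fun y hy => by rw [commutatorElement_one_left]; exact one_mem H⟩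
  · rintro x z hx hz ⟨hxS, hxc⟩ ⟨hzS, hzc⟩
    refine ⟨mul_mem hxS hzS, fun y hy => ?_⟩
    have e : ⁅x * z, y⁆ = x * ⁅z, y⁆ * x⁻¹ * ⁅x, y⁆ := by
      simp only [commutatorElement_def]; group
    rw [e]
    exact mul_mem (hconj x hxS _ (hzc y hy)) (hxc y hy)
  · rintro x hx ⟨hxS, hxc⟩
    refine ⟨inv_mem hxS, fun y hy => ?_⟩
    have e : ⁅x⁻¹, y⁆ = x⁻¹ * ⁅x, y⁆⁻¹ * (x⁻¹)⁻¹ := by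
      simp only [commutatorElement_def]; group
    rw [e]
    exact hconj x⁻¹ (inv_mem hxS) _ (inv_mem (hxc y hy))

theorem sup_le_higgins {K L M : Subgroup G} :
    ⁅⁅K, L⁆, M⁆ ⊔ ⁅⁅M, K⁆, L⁆ ≤ higgins ![K, L, M] := by
  have hconj : ∀ g ∈ K ⊔ L ⊔ M, ∀ x ∈ higgins ![K, L, M], g * x * g⁻¹ ∈ higgins ![K, L, M] :=
    fun g hg x hx => ((Subgroup.mem_normalizer_iff.mp (sup_le_normalizer hg)) x).mp hx
  refine sup_le ?_ ?_
  · rw [Subgroup.commutator_def K L]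
    refine commutator_closure_le ?_ hconj ?_
    · rintro t ⟨k, hk, l, hl, rfl⟩
      exact mul_mem (mul_mem (mul_mem
        (Subgroup.mem_sup_left (Subgroup.mem_sup_left hk)) (Subgroup.mem_sup_left (Subgroup.mem_sup_right hl)))
        (inv_mem (Subgroup.mem_sup_left (Subgroup.mem_sup_left hk)))) (inv_mem (Subgroup.mem_sup_left (Subgroup.mem_sup_right hl)))
    · rintro t ⟨k, hk, l, hl, rfl⟩ y hy
      exact tripleComm_mem_higgins_KLM hk hl hy
  · rw [Subgroup.commutator_def M K]
    refine commutator_closure_le ?_ hconj ?_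
    · rintro t ⟨m, hm, k, hk, rfl⟩
      exact mul_mem (mul_mem (mul_mem
        (Subgroup.mem_sup_right hm) (Subgroup.mem_sup_left (Subgroup.mem_sup_left hk)))
        (inv_mem (Subgroup.mem_sup_right hm))) (inv_mem (Subgroup.mem_sup_left (Subgroup.mem_sup_left hk)))
    · rintro t ⟨m, hm, k, hk, rfl⟩ y hy
      exact tripleComm_mem_higgins_MKL hk hy hm


end ThreeSubAux

/-- **The Three Subobjects Lemma in groups.** For normal subgroups `K, L, M` of `G`,
the ternary Higgins commutator satisfies `H(K,L,M) = ⁅⁅K,L⁆,M⁆ ⊔ ⁅⁅M,K⁆,L⁆`. -/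
theorem three_subobjects_lemma {G : Type*} [Group G] (K L M : Subgroup G)
    (hK : K.Normal) (hL : L.Normal) (hM : M.Normal) :
    higgins ![K, L, M] = ⁅⁅K, L⁆, M⁆ ⊔ ⁅⁅M, K⁆, L⁆ := by
  exact le_antisymm (ThreeSubAux.higgins_le_sup hK hL hM) ThreeSubAux.sup_le_higgins
end

section
/- Let K, L, M be normal subgroups of a group G. Then the ternary Higgins commutator decomposes as H(K,L,M) = ⁅⁅K,L⁆,M⁆ ⊔ ⁅⁅L,M⁆,K⁆ ⊔ ⁅⁅M,K⁆,L⁆ as subgroups of G. -/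
open scoped commutatorElement

namespace THiggins

open Monoid Subgroup

variable {G : Type*} [Group G]

/-- The canonical homomorphism from the free product to `G`. -/
def kappa {n : ℕ} (KV : Fin n → Subgroup G) :
    Monoid.CoprodI (fun i => ↥(KV i)) →* G :=
  Monoid.CoprodI.lift (fun i => (KV i).subtype)

lemma kappa_of {n : ℕ} (KV : Fin n → Subgroup G) {i : Fin n} (x : ↥(KV i)) :
    kappa KV (Monoid.CoprodI.of x) = ↑x :=
  Monoid.CoprodI.lift_of _ _

lemma piHat_of {n : ℕ} (KV : Fin n → Subgroup G) (k : Fin n) {i : Fin n} (x : ↥(KV i)) :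
    piHat KV k (Monoid.CoprodI.of x) =
      if i = k then 1 else Monoid.CoprodI.of (M := fun i => ↥(KV i)) x := by
  unfold piHat
  rw [Monoid.CoprodI.lift_of]
  split <;> rfl

lemma pair_lift {n : ℕ} (KV : Fin n → Subgroup G) (i j : Fin n)
    (x : G) (hx : x ∈ (⁅KV i, KV j⁆ : Subgroup G)) :
    ∃ u, kappa KV u = x ∧ piHat KV i u = 1 ∧ piHat KV j u = 1 := by
  rw [Subgroup.commutator_def] at hx
  induction hx using Subgroup.closure_induction with
  | mem y hy =>
    obtain ⟨g₁, h₁, g₂, h₂, rfl⟩ := hy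
    refine ⟨⁅Monoid.CoprodI.of (M := fun i => ↥(KV i)) (⟨g₁, h₁⟩ : ↥(KV i)),
            Monoid.CoprodI.of (M := fun i => ↥(KV i)) (⟨g₂, h₂⟩ : ↥(KV j))⁆, ?_, ?_, ?_⟩
    · rw [map_commutatorElement, kappa_of, kappa_of]
    · have e1 : piHat KV i (Monoid.CoprodI.of (M := fun i => ↥(KV i)) (⟨g₁, h₁⟩ : ↥(KV i))) = 1 := by
        rw [piHat_of, if_pos rfl]
      rw [map_commutatorElement, e1]
      simp [commutatorElement_def]
    · have e2 : piHat KV j (Monoid.CoprodI.of (M := fun i => ↥(KV i)) (⟨g₂, h₂⟩ : ↥(KV j))) = 1 := by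
        rw [piHat_of, if_pos rfl]
      rw [map_commutatorElement, e2]
      simp [commutatorElement_def]
  | one => exact ⟨1, map_one _, map_one _, map_one _⟩
  | mul y y' hy hy' ihy ihy' =>
    obtain ⟨u, hu1, hu2, hu3⟩ := ihy
    obtain ⟨v, hv1, hv2, hv3⟩ := ihy'
    exact ⟨u * v, by rw [map_mul, hu1, hv1], by rw [map_mul, hu2, hv2, one_mul],
      by rw [map_mul, hu3, hv3, one_mul]⟩
  | inv y hy ihy =>
    obtain ⟨u, hu1, hu2, hu3⟩ := ihy
    exact ⟨u⁻¹, by rw [map_inv, hu1], by rw [map_inv, hu2, inv_one],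
      by rw [map_inv, hu3, inv_one]⟩

lemma triple_le (KV : Fin 3 → Subgroup G) (i j k : Fin 3)
    (hcov : ∀ l : Fin 3, l = i ∨ l = j ∨ l = k) :
    (⁅(⁅KV i, KV j⁆ : Subgroup G), KV k⁆ : Subgroup G) ≤ higgins KV := by
  rw [Subgroup.commutator_le]
  intro x hx m hm
  obtain ⟨u, hu, hui, huj⟩ := pair_lift KV i j x hx
  unfold higgins cosmash
  refine Subgroup.mem_map.mpr
    ⟨⁅u, Monoid.CoprodI.of (M := fun i => ↥(KV i)) (⟨m, hm⟩ : ↥(KV k))⁆, ?_, ?_⟩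
  · refine Subgroup.mem_iInf.mpr fun l => MonoidHom.mem_ker.mpr ?_
    rcases hcov l with rfl | rfl | rfl
    · rw [map_commutatorElement, hui]; simp [commutatorElement_def]
    · rw [map_commutatorElement, huj]; simp [commutatorElement_def]
    · rw [map_commutatorElement, piHat_of, if_pos rfl]; simp [commutatorElement_def]
  · show kappa KV _ = _
    rw [map_commutatorElement, hu, kappa_of]

section PureGroup

variable {Q : Type*} [Group Q]

lemma key_identity (k l a t : Q)
    (h1 : (l⁻¹ * (k⁻¹ * a)) * t = t * (l⁻¹ * (k⁻¹ * a)))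
    (h2 : (l * t * l⁻¹ * t⁻¹) * k = k * (l * t * l⁻¹ * t⁻¹))
    (h3 : (l * t * l⁻¹ * t⁻¹) * (k * t * k⁻¹ * t⁻¹) = (k * t * k⁻¹ * t⁻¹) * (l * t * l⁻¹ * t⁻¹)) :
    a * t * a⁻¹ = (k * t * k⁻¹) * t⁻¹ * (l * t * l⁻¹) := by
  have hc : (l⁻¹ * (k⁻¹ * a)) * t * (l⁻¹ * (k⁻¹ * a))⁻¹ = t := by rw [h1]; group
  calc a * t * a⁻¹
      = k * (l * ((l⁻¹ * (k⁻¹ * a)) * t * (l⁻¹ * (k⁻¹ * a))⁻¹) * l⁻¹) * k⁻¹ := by group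
    _ = k * (l * t * l⁻¹) * k⁻¹ := by rw [hc]
    _ = (k * (l * t * l⁻¹ * t⁻¹)) * (t * k⁻¹) := by group
    _ = ((l * t * l⁻¹ * t⁻¹) * k) * (t * k⁻¹) := by rw [← h2]
    _ = ((l * t * l⁻¹ * t⁻¹) * (k * t * k⁻¹ * t⁻¹)) * t := by group
    _ = ((k * t * k⁻¹ * t⁻¹) * (l * t * l⁻¹ * t⁻¹)) * t := by rw [h3]
    _ = (k * t * k⁻¹) * t⁻¹ * (l * t * l⁻¹) := by group

lemma mul_identity (Bu Du Eu Bv Dv Ev : Q)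
    (hswap : (Du⁻¹ * Eu) * (Dv * (Dv⁻¹ * Bv) * Dv⁻¹) = (Dv * (Dv⁻¹ * Bv) * Dv⁻¹) * (Du⁻¹ * Eu)) :
    (Bu * Du⁻¹ * Eu) * (Bv * Dv⁻¹ * Ev) = (Bu * Bv) * (Du * Dv)⁻¹ * (Eu * Ev) := by
  have h : (Du⁻¹ * Eu) * (Bv * Dv⁻¹) = (Bv * Dv⁻¹) * (Du⁻¹ * Eu) := by
    have e : Dv * (Dv⁻¹ * Bv) * Dv⁻¹ = Bv * Dv⁻¹ := by group
    rw [e] at hswap; exact hswap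
  calc (Bu * Du⁻¹ * Eu) * (Bv * Dv⁻¹ * Ev)
      = Bu * ((Du⁻¹ * Eu) * (Bv * Dv⁻¹)) * Ev := by group
    _ = Bu * ((Bv * Dv⁻¹) * (Du⁻¹ * Eu)) * Ev := by rw [h]
    _ = (Bu * Bv) * (Du * Dv)⁻¹ * (Eu * Ev) := by group

lemma inv_identity (B D E : Q)
    (hswap : (D⁻¹ * E) * (D⁻¹ * B) = (D⁻¹ * B) * (D⁻¹ * E)) :
    (B * D⁻¹ * E)⁻¹ = B⁻¹ * (D⁻¹)⁻¹ * E⁻¹ := by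
  have h2 : (D⁻¹ * B)⁻¹ * (D⁻¹ * E)⁻¹ = (D⁻¹ * E)⁻¹ * (D⁻¹ * B)⁻¹ := by
    rw [← mul_inv_rev, ← mul_inv_rev, hswap]
  calc (B * D⁻¹ * E)⁻¹
      = (D⁻¹ * E)⁻¹ * (D⁻¹ * B)⁻¹ * D⁻¹ := by group
    _ = (D⁻¹ * B)⁻¹ * (D⁻¹ * E)⁻¹ * D⁻¹ := by rw [← h2]
    _ = B⁻¹ * (D⁻¹)⁻¹ * E⁻¹ := by group

lemma memC_mul_identity (k l a k' l' a' : Q) :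
    (l * l')⁻¹ * ((k * k')⁻¹ * (a * a')) =
      (l'⁻¹ * ((l⁻¹ * k'⁻¹ * l * k') * (k'⁻¹ * (l⁻¹ * (k⁻¹ * a)) * k')) * l')
        * (l'⁻¹ * (k'⁻¹ * a')) := by group

end PureGroup

section Kernel

variable (KV : Fin 3 → Subgroup G)

lemma fin3cases : ∀ i : Fin 3, i = 0 ∨ i = 1 ∨ i = 2 := by decide

/-- Generators of the normal closure of the third factor: conjugates by elements in the
range of `piHat KV 2`. -/
def genS : Set (Monoid.CoprodI (fun i => ↥(KV i))) :=
  {x | ∃ (g : Monoid.CoprodI (fun i => ↥(KV i))) (z : ↥(KV 2)),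
    x = piHat KV 2 g * Monoid.CoprodI.of (M := fun i => ↥(KV i)) z * (piHat KV 2 g)⁻¹}

lemma tripleKill (g : Monoid.CoprodI (fun i => ↥(KV i))) :
    piHat KV 0 (piHat KV 1 (piHat KV 2 g)) = 1 := by
  induction g using Monoid.CoprodI.induction_on with
  | one => simp
  | of i x =>
    rcases fin3cases i with h | h | h <;> subst h <;>
      simp [piHat_of]
  | mul x y hx hy =>
    rw [map_mul, map_mul, map_mul, hx, hy, one_mul]

lemma conj_genS (g : Monoid.CoprodI (fun i => ↥(KV i)))
    {x : Monoid.CoprodI (fun i => ↥(KV i))} (hx : x ∈ Subgroup.closure (genS KV)) :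
    piHat KV 2 g * x * (piHat KV 2 g)⁻¹ ∈ Subgroup.closure (genS KV) := by
  induction hx using Subgroup.closure_induction with
  | mem y hy =>
    obtain ⟨g', z, rfl⟩ := hy
    exact Subgroup.subset_closure ⟨g * g', z, by rw [map_mul]; group⟩
  | one => simpa using one_mem _
  | mul y y' hy hy' ihy ihy' =>
    have e : piHat KV 2 g * (y * y') * (piHat KV 2 g)⁻¹ =
        (piHat KV 2 g * y * (piHat KV 2 g)⁻¹) * (piHat KV 2 g * y' * (piHat KV 2 g)⁻¹) := by
      group
    rw [e]; exact mul_mem ihy ihy'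
  | inv y hy ihy =>
    have e : piHat KV 2 g * y⁻¹ * (piHat KV 2 g)⁻¹ =
        (piHat KV 2 g * y * (piHat KV 2 g)⁻¹)⁻¹ := by group
    rw [e]; exact inv_mem ihy

lemma mem_closure_genS {w : Monoid.CoprodI (fun i => ↥(KV i))}
    (h : piHat KV 2 w = 1) : w ∈ Subgroup.closure (genS KV) := by
  have key : ∀ u : Monoid.CoprodI (fun i => ↥(KV i)),
      (piHat KV 2 u)⁻¹ * u ∈ Subgroup.closure (genS KV) := by
    intro u
    induction u using Monoid.CoprodI.induction_on with
    | one => simpa using one_mem _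
    | of i x =>
      rcases fin3cases i with h | h | h <;> subst h
      · rw [piHat_of, if_neg (by decide)]; simpa using one_mem _
      · rw [piHat_of, if_neg (by decide)]; simpa using one_mem _
      · rw [piHat_of, if_pos rfl, inv_one, one_mul]
        exact Subgroup.subset_closure ⟨1, x, by simp⟩
    | mul u v hu hv =>
      have e : (piHat KV 2 (u * v))⁻¹ * (u * v) =
          (piHat KV 2 v⁻¹ * ((piHat KV 2 u)⁻¹ * u) * (piHat KV 2 v⁻¹)⁻¹)
            * ((piHat KV 2 v)⁻¹ * v) := by
        rw [map_mul, map_inv]; group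
      rw [e]; exact mul_mem (conj_genS KV v⁻¹ hu) hv
  have := key w
  rwa [h, inv_one, one_mul] at this

variable {Q : Type*} [Group Q] (q : G →* Q)

lemma memK (g : Monoid.CoprodI (fun i => ↥(KV i))) :
    q (kappa KV (piHat KV 1 (piHat KV 2 g))) ∈ (KV 0).map q := by
  induction g using Monoid.CoprodI.induction_on with
  | one => simp only [map_one]; exact one_mem _
  | of i x =>
    rcases fin3cases i with h | h | h <;> subst h
    · rw [piHat_of, if_neg (by decide), piHat_of, if_neg (by decide), kappa_of]
      exact ⟨↑x, x.2, rfl⟩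
    · rw [piHat_of, if_neg (by decide), piHat_of, if_pos rfl]
      simp only [map_one]; exact one_mem _
    · rw [piHat_of, if_pos rfl]
      simp only [map_one]; exact one_mem _
  | mul u v hu hv =>
    rw [map_mul, map_mul, map_mul, map_mul]
    exact mul_mem hu hv

lemma memL (g : Monoid.CoprodI (fun i => ↥(KV i))) :
    q (kappa KV (piHat KV 0 (piHat KV 2 g))) ∈ (KV 1).map q := by
  induction g using Monoid.CoprodI.induction_on with
  | one => simp only [map_one]; exact one_mem _
  | of i x =>
    rcases fin3cases i with h | h | h <;> subst h
    · rw [piHat_of, if_neg (by decide), piHat_of, if_pos rfl]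
      simp only [map_one]; exact one_mem _
    · rw [piHat_of, if_neg (by decide), piHat_of, if_neg (by decide), kappa_of]
      exact ⟨↑x, x.2, rfl⟩
    · rw [piHat_of, if_pos rfl]
      simp only [map_one]; exact one_mem _
  | mul u v hu hv =>
    rw [map_mul, map_mul, map_mul, map_mul]
    exact mul_mem hu hv

lemma memC [hKL : (⁅(KV 0).map q, (KV 1).map q⁆ : Subgroup Q).Normal]
    (g : Monoid.CoprodI (fun i => ↥(KV i))) :
    (q (kappa KV (piHat KV 0 (piHat KV 2 g))))⁻¹ *
      ((q (kappa KV (piHat KV 1 (piHat KV 2 g))))⁻¹ * q (kappa KV (piHat KV 2 g)))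
      ∈ (⁅(KV 0).map q, (KV 1).map q⁆ : Subgroup Q) := by
  induction g using Monoid.CoprodI.induction_on with
  | one => simp only [map_one, inv_one, one_mul, mul_one]; exact one_mem _
  | of i x =>
    rcases fin3cases i with h | h | h <;> subst h
    · have p2 : piHat KV 2 (Monoid.CoprodI.of x) = Monoid.CoprodI.of (M := fun i => ↥(KV i)) x := by
        rw [piHat_of, if_neg (by decide)]
      have p1 : piHat KV 1 (Monoid.CoprodI.of x) = Monoid.CoprodI.of (M := fun i => ↥(KV i)) x := by
        rw [piHat_of, if_neg (by decide)]
      have p0 : piHat KV 0 (Monoid.CoprodI.of x) = 1 := by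
        rw [piHat_of, if_pos rfl]
      rw [p2, p1, p0]
      simp only [map_one, inv_one, one_mul, inv_mul_cancel]
      exact one_mem _
    · have p2 : piHat KV 2 (Monoid.CoprodI.of x) = Monoid.CoprodI.of (M := fun i => ↥(KV i)) x := by
        rw [piHat_of, if_neg (by decide)]
      have p1 : piHat KV 1 (Monoid.CoprodI.of x) = 1 := by
        rw [piHat_of, if_pos rfl]
      have p0 : piHat KV 0 (Monoid.CoprodI.of x) = Monoid.CoprodI.of (M := fun i => ↥(KV i)) x := by
        rw [piHat_of, if_neg (by decide)]
      rw [p2, p1, p0]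
      simp only [map_one, inv_one, one_mul, inv_mul_cancel]
      exact one_mem _
    · have p2 : piHat KV 2 (Monoid.CoprodI.of x) = 1 := by
        rw [piHat_of, if_pos rfl]
      rw [p2]
      simp only [map_one, inv_one, one_mul, mul_one, inv_mul_cancel]
      exact one_mem _
  | mul u v hu hv =>
    simp only [map_mul]
    rw [memC_mul_identity]
    have h1 := Subgroup.commutator_mem_commutator
      (inv_mem (memL KV q u)) (inv_mem (memK KV q v))
    rw [commutatorElement_def, inv_inv, inv_inv] at h1
    rw [Subgroup.commutator_comm] at h1
    have h2 := hKL.conj_mem _ hu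
      ((q (kappa KV (piHat KV 1 (piHat KV 2 v))))⁻¹)
    rw [inv_inv] at h2
    have h4 := hKL.conj_mem _ (mul_mem h1 h2)
      ((q (kappa KV (piHat KV 0 (piHat KV 2 v))))⁻¹)
    rw [inv_inv] at h4
    exact mul_mem h4 hv

lemma kernel_lemma [hKn : ((KV 0).map q).Normal]
    [hKL : (⁅(KV 0).map q, (KV 1).map q⁆ : Subgroup Q).Normal]
    [hML : (⁅(KV 2).map q, (KV 1).map q⁆ : Subgroup Q).Normal]
    [hMK : (⁅(KV 2).map q, (KV 0).map q⁆ : Subgroup Q).Normal]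
    (hc1 : ∀ c ∈ (⁅(KV 0).map q, (KV 1).map q⁆ : Subgroup Q), ∀ m ∈ (KV 2).map q, c * m = m * c)
    (hc2 : ∀ v ∈ (⁅(KV 1).map q, (KV 2).map q⁆ : Subgroup Q), ∀ k ∈ (KV 0).map q, v * k = k * v)
    (w : Monoid.CoprodI (fun i => ↥(KV i)))
    (h0 : piHat KV 0 w = 1) (h1 : piHat KV 1 w = 1) (h2 : piHat KV 2 w = 1) :
    q (kappa KV w) = 1 := by
  have hswapML : ∀ a ∈ (⁅(KV 2).map q, (KV 1).map q⁆ : Subgroup Q),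
      ∀ b ∈ (⁅(KV 2).map q, (KV 0).map q⁆ : Subgroup Q), a * b = b * a := by
    intro a ha b hb
    have ha' : a ∈ (⁅(KV 1).map q, (KV 2).map q⁆ : Subgroup Q) := by
      rwa [Subgroup.commutator_comm] at ha
    exact hc2 a ha' b (Subgroup.commutator_le_right _ _ hb)
  have main : ∀ x, x ∈ Subgroup.closure (genS KV) →
      (q (kappa KV x) =
        q (kappa KV (piHat KV 1 x)) * (q (kappa KV (piHat KV 0 (piHat KV 1 x))))⁻¹ *
          q (kappa KV (piHat KV 0 x)))
      ∧ ((q (kappa KV (piHat KV 0 (piHat KV 1 x))))⁻¹ * q (kappa KV (piHat KV 0 x))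
          ∈ (⁅(KV 2).map q, (KV 1).map q⁆ : Subgroup Q))
      ∧ ((q (kappa KV (piHat KV 0 (piHat KV 1 x))))⁻¹ * q (kappa KV (piHat KV 1 x))
          ∈ (⁅(KV 2).map q, (KV 0).map q⁆ : Subgroup Q)) := by
    intro x hx
    induction hx using Subgroup.closure_induction with
    | mem y hy =>
      obtain ⟨g, z, rfl⟩ := hy
      have p1z : piHat KV 1 (Monoid.CoprodI.of (M := fun i => ↥(KV i)) z) =
          Monoid.CoprodI.of (M := fun i => ↥(KV i)) z := by
        rw [piHat_of, if_neg (by decide)]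
      have p0z : piHat KV 0 (Monoid.CoprodI.of (M := fun i => ↥(KV i)) z) =
          Monoid.CoprodI.of (M := fun i => ↥(KV i)) z := by
        rw [piHat_of, if_neg (by decide)]
      have e1 : piHat KV 1 (piHat KV 2 g * Monoid.CoprodI.of (M := fun i => ↥(KV i)) z *
            (piHat KV 2 g)⁻¹) =
          piHat KV 1 (piHat KV 2 g) * Monoid.CoprodI.of (M := fun i => ↥(KV i)) z *
            (piHat KV 1 (piHat KV 2 g))⁻¹ := by
        rw [map_mul, map_mul, map_inv, p1z]
      have e0 : piHat KV 0 (piHat KV 2 g * Monoid.CoprodI.of (M := fun i => ↥(KV i)) z *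
            (piHat KV 2 g)⁻¹) =
          piHat KV 0 (piHat KV 2 g) * Monoid.CoprodI.of (M := fun i => ↥(KV i)) z *
            (piHat KV 0 (piHat KV 2 g))⁻¹ := by
        rw [map_mul, map_mul, map_inv, p0z]
      have e01 : piHat KV 0 (piHat KV 1 (piHat KV 2 g *
            Monoid.CoprodI.of (M := fun i => ↥(KV i)) z * (piHat KV 2 g)⁻¹)) =
          Monoid.CoprodI.of (M := fun i => ↥(KV i)) z := by
        rw [e1, map_mul, map_mul, map_inv, p0z, tripleKill]
        simp
      rw [e01, e0, e1]
      simp only [map_mul, map_inv]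
      set k := q (kappa KV (piHat KV 1 (piHat KV 2 g))) with hk
      set l := q (kappa KV (piHat KV 0 (piHat KV 2 g))) with hl
      set a := q (kappa KV (piHat KV 2 g)) with ha
      set t := q (kappa KV (Monoid.CoprodI.of (M := fun i => ↥(KV i)) z)) with htt
      have ht : t ∈ (KV 2).map q := ⟨↑z, z.2, by rw [htt, kappa_of]⟩
      have hkK : k ∈ (KV 0).map q := memK KV q g
      have hlL : l ∈ (KV 1).map q := memL KV q g
      have hI1 : (l⁻¹ * (k⁻¹ * a)) * t = t * (l⁻¹ * (k⁻¹ * a)) :=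
        hc1 _ (memC KV q g) t ht
      have hv : l * t * l⁻¹ * t⁻¹ ∈ (⁅(KV 1).map q, (KV 2).map q⁆ : Subgroup Q) :=
        Subgroup.commutator_mem_commutator hlL ht
      have hI2 : (l * t * l⁻¹ * t⁻¹) * k = k * (l * t * l⁻¹ * t⁻¹) := hc2 _ hv k hkK
      have huK : k * t * k⁻¹ * t⁻¹ ∈ (KV 0).map q := by
        have h' := hKn.conj_mem _ (inv_mem hkK) t
        have := mul_mem hkK h'
        simpa [mul_assoc] using this
      have hI3 : (l * t * l⁻¹ * t⁻¹) * (k * t * k⁻¹ * t⁻¹) =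
          (k * t * k⁻¹ * t⁻¹) * (l * t * l⁻¹ * t⁻¹) := hc2 _ hv _ huK
      refine ⟨key_identity k l a t hI1 hI2 hI3, ?_, ?_⟩
      · have e : t⁻¹ * (l * t * l⁻¹) = ⁅t⁻¹, l⁆ := by
          rw [commutatorElement_def, inv_inv]; group
        rw [e]
        exact Subgroup.commutator_mem_commutator (inv_mem ht) hlL
      · have e : t⁻¹ * (k * t * k⁻¹) = ⁅t⁻¹, k⁆ := by
          rw [commutatorElement_def, inv_inv]; group
        rw [e]
        exact Subgroup.commutator_mem_commutator (inv_mem ht) hkK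
    | one =>
      refine ⟨by simp, ?_, ?_⟩ <;> · simp only [map_one, inv_one, one_mul]; exact one_mem _
    | mul u v hu hv ihu ihv =>
      obtain ⟨P1u, P2u, P3u⟩ := ihu
      obtain ⟨P1v, P2v, P3v⟩ := ihv
      simp only [map_mul]
      set Bu := q (kappa KV (piHat KV 1 u)) with hBu
      set Du := q (kappa KV (piHat KV 0 (piHat KV 1 u))) with hDu
      set Eu := q (kappa KV (piHat KV 0 u)) with hEu
      set Bv := q (kappa KV (piHat KV 1 v)) with hBv
      set Dv := q (kappa KV (piHat KV 0 (piHat KV 1 v))) with hDv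
      set Ev := q (kappa KV (piHat KV 0 v)) with hEv
      refine ⟨?_, ?_, ?_⟩
      · rw [P1u, P1v]
        exact mul_identity Bu Du Eu Bv Dv Ev (hswapML _ P2u _ (hMK.conj_mem _ P3v Dv))
      · have e : (Du * Dv)⁻¹ * (Eu * Ev) =
            (Dv⁻¹ * (Du⁻¹ * Eu) * (Dv⁻¹)⁻¹) * (Dv⁻¹ * Ev) := by group
        rw [e]
        exact mul_mem (hML.conj_mem _ P2u Dv⁻¹) P2v
      · have e : (Du * Dv)⁻¹ * (Bu * Bv) =
            (Dv⁻¹ * (Du⁻¹ * Bu) * (Dv⁻¹)⁻¹) * (Dv⁻¹ * Bv) := by group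
        rw [e]
        exact mul_mem (hMK.conj_mem _ P3u Dv⁻¹) P3v
    | inv u hu ihu =>
      obtain ⟨P1u, P2u, P3u⟩ := ihu
      simp only [map_inv]
      set Bu := q (kappa KV (piHat KV 1 u)) with hBu
      set Du := q (kappa KV (piHat KV 0 (piHat KV 1 u))) with hDu
      set Eu := q (kappa KV (piHat KV 0 u)) with hEu
      refine ⟨?_, ?_, ?_⟩
      · rw [P1u]
        exact inv_identity Bu Du Eu (hswapML _ P2u _ P3u)
      · have e : (Du⁻¹)⁻¹ * Eu⁻¹ = Du * (Du⁻¹ * Eu)⁻¹ * Du⁻¹ := by group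
        rw [e]
        have := hML.conj_mem _ (inv_mem P2u) Du
        simpa using this
      · have e : (Du⁻¹)⁻¹ * Bu⁻¹ = Du * (Du⁻¹ * Bu)⁻¹ * Du⁻¹ := by group
        rw [e]
        have := hMK.conj_mem _ (inv_mem P3u) Du
        simpa using this
  obtain ⟨P1, -, -⟩ := main w (mem_closure_genS KV h2)
  rw [h0, h1] at P1
  simpa using P1

end Kernel

end THiggins

/-- For normal subgroups `K, L, M` of `G`, the ternary Higgins commutator decomposes as
`H(K,L,M) = ⁅⁅K,L⁆,M⁆ ⊔ ⁅⁅L,M⁆,K⁆ ⊔ ⁅⁅M,K⁆,L⁆`. -/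
theorem ternary_higgins_decomposition {G : Type*} [Group G] (K L M : Subgroup G)
    (hK : K.Normal) (hL : L.Normal) (hM : M.Normal) :
    higgins ![K, L, M] = ⁅⁅K, L⁆, M⁆ ⊔ ⁅⁅L, M⁆, K⁆ ⊔ ⁅⁅M, K⁆, L⁆ := by
  haveI := hK; haveI := hL; haveI := hM
  set KV : Fin 3 → Subgroup G := ![K, L, M] with hKV
  apply le_antisymm
  · set N : Subgroup G := ⁅⁅K, L⁆, M⁆ ⊔ ⁅⁅L, M⁆, K⁆ ⊔ ⁅⁅M, K⁆, L⁆ with hN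
    haveI hNn : N.Normal := by rw [hN]; infer_instance
    intro y hy
    obtain ⟨w, hw, rfl⟩ := Subgroup.mem_map.mp hy
    set q := QuotientGroup.mk' N with hq
    haveI i1 : ((KV 0).map q).Normal := hK.map q (QuotientGroup.mk'_surjective N)
    haveI i2 : ((KV 1).map q).Normal := hL.map q (QuotientGroup.mk'_surjective N)
    haveI i3 : ((KV 2).map q).Normal := hM.map q (QuotientGroup.mk'_surjective N)
    have hb1 : (⁅⁅(KV 0).map q, (KV 1).map q⁆, (KV 2).map q⁆ : Subgroup _) = ⊥ := by
      rw [← Subgroup.map_commutator, ← Subgroup.map_commutator, Subgroup.map_eq_bot_iff,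
        QuotientGroup.ker_mk']
      exact le_trans le_sup_left le_sup_left
    have hb2 : (⁅⁅(KV 1).map q, (KV 2).map q⁆, (KV 0).map q⁆ : Subgroup _) = ⊥ := by
      rw [← Subgroup.map_commutator, ← Subgroup.map_commutator, Subgroup.map_eq_bot_iff,
        QuotientGroup.ker_mk']
      exact le_trans le_sup_right le_sup_left
    have hc1 : ∀ c ∈ (⁅(KV 0).map q, (KV 1).map q⁆ : Subgroup _),
        ∀ m ∈ (KV 2).map q, c * m = m * c := by
      intro c hc m hm
      have hmem : ⁅c, m⁆ ∈ (⊥ : Subgroup _) :=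
        hb1 ▸ Subgroup.commutator_mem_commutator hc hm
      rw [Subgroup.mem_bot] at hmem
      exact commutatorElement_eq_one_iff_mul_comm.mp hmem
    have hc2 : ∀ v ∈ (⁅(KV 1).map q, (KV 2).map q⁆ : Subgroup _),
        ∀ k ∈ (KV 0).map q, v * k = k * v := by
      intro v hv k hk
      have hmem : ⁅v, k⁆ ∈ (⊥ : Subgroup _) :=
        hb2 ▸ Subgroup.commutator_mem_commutator hv hk
      rw [Subgroup.mem_bot] at hmem
      exact commutatorElement_eq_one_iff_mul_comm.mp hmem
    have hker : ∀ l, piHat KV l w = 1 := fun l =>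
      MonoidHom.mem_ker.mp (Subgroup.mem_iInf.mp hw l)
    have hq1 : q (THiggins.kappa KV w) = 1 :=
      THiggins.kernel_lemma KV q hc1 hc2 w (hker 0) (hker 1) (hker 2)
    show THiggins.kappa KV w ∈ N
    have hker' : THiggins.kappa KV w ∈ (QuotientGroup.mk' N).ker :=
      MonoidHom.mem_ker.mpr hq1
    rwa [QuotientGroup.ker_mk'] at hker'
  · refine sup_le (sup_le ?_ ?_) ?_
    · exact THiggins.triple_le KV 0 1 2 (by decide)
    · exact THiggins.triple_le KV 1 2 0 (by decide)
    · exact THiggins.triple_le KV 2 0 1 (by decide)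
end

section
/- Let K and L be normal subgroups of a group G. Then H(K, L, ⊤) ≤ ⁅K, L⁆, where ⊤ denotes G viewed as a subgroup of itself; that is, the ternary Higgins commutator of K, L and G is contained in the commutator subgroup of K and L. -/
set_option linter.unusedSectionVars false
namespace HigginsAux

open Monoid SemidirectProduct

def mk3 {M : Fin 3 → Sort*} (a : M 0) (b : M 1) (c : M 2) : ∀ i, M i
  | ⟨0, _⟩ => a
  | ⟨1, _⟩ => b
  | ⟨2, _⟩ => c

variable {G : Type*} [Group G] (K L : Subgroup G) [hKn : K.Normal] [hLn : L.Normal]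

abbrev Kv : Fin 3 → Subgroup G := ![K, L, ⊤]

abbrev QG := G ⧸ (⁅K, L⁆ : Subgroup G)

def qm : G →* QG K L := QuotientGroup.mk' _

def K' : Subgroup (QG K L) := K.map (qm K L)
def L' : Subgroup (QG K L) := L.map (qm K L)

instance : (K' K L).Normal := hKn.map _ (QuotientGroup.mk'_surjective _)
instance : (L' K L).Normal := hLn.map _ (QuotientGroup.mk'_surjective _)

abbrev W := (K' K L) ⋊[MulAut.conjNormal] (QG K L)

/-- the anti-diagonal hom on factor `K` -/
def φ0 : K →* W K L where
  toFun a := ⟨(⟨qm K L a, Subgroup.mem_map_of_mem _ a.2⟩ : K' K L)⁻¹, qm K L a⟩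
  map_one' := by
    ext <;> simp
  map_mul' a b := by
    ext
    · simp only [MonoidHom.toFun_eq_coe, SemidirectProduct.mul_left, MulAut.conjNormal_apply,
        Subgroup.coe_mul, InvMemClass.coe_inv, map_mul]
      group
    · simp [SemidirectProduct.mul_right]


def κh : Monoid.CoprodI (fun i => ↥(Kv K L i)) →* G :=
  Monoid.CoprodI.lift (fun i => (Kv K L i).subtype)

def fh : Monoid.CoprodI (fun i => ↥(Kv K L i)) →* QG K L := (qm K L).comp (κh K L)

def Φ : Monoid.CoprodI (fun i => ↥(Kv K L i)) →* W K L :=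
  Monoid.CoprodI.lift (mk3 (φ0 K L)
    (inr.comp ((qm K L).comp L.subtype))
    (inr.comp ((qm K L).comp (⊤ : Subgroup G).subtype)))

def Φ₂ : Monoid.CoprodI (fun i => ↥(Kv K L i)) →* W K L :=
  Monoid.CoprodI.lift (mk3 (φ0 K L) 1
    (inr.comp ((qm K L).comp (⊤ : Subgroup G).subtype)))

lemma piHat_of (i k : Fin 3) (x : ↥(Kv K L i)) :
    piHat (Kv K L) k (Monoid.CoprodI.of x)
      = if i = k then 1 else Monoid.CoprodI.of (M := fun i => ↥(Kv K L i)) x := by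
  simp only [piHat, Monoid.CoprodI.lift_of]
  split <;> simp

lemma fh_of {i : Fin 3} (x : ↥(Kv K L i)) :
    fh K L (Monoid.CoprodI.of x) = qm K L ↑x := by
  simp only [fh, κh, MonoidHom.comp_apply, Monoid.CoprodI.lift_of]
  rfl

lemma rightHom_Φ : rightHom.comp (Φ K L) = fh K L := by
  refine Monoid.CoprodI.ext_hom _ _ fun i => ?_
  refine MonoidHom.ext fun x => ?_
  simp only [MonoidHom.comp_apply, Φ, fh, κh, Monoid.CoprodI.lift_of]
  fin_cases i <;> rfl

lemma rightHom_Φ₂ : rightHom.comp (Φ₂ K L) = (fh K L).comp (piHat (Kv K L) 1) := by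
  refine Monoid.CoprodI.ext_hom _ _ fun i => ?_
  refine MonoidHom.ext fun x => ?_
  simp only [MonoidHom.comp_apply, Φ₂, Monoid.CoprodI.lift_of, piHat_of]
  fin_cases i <;> simp <;> rfl

lemma Φ₂_piHat : (Φ₂ K L).comp (piHat (Kv K L) 1) = Φ₂ K L := by
  refine Monoid.CoprodI.ext_hom _ _ fun i => ?_
  refine MonoidHom.ext fun x => ?_
  simp only [MonoidHom.comp_apply, Φ₂, Monoid.CoprodI.lift_of, piHat_of]
  fin_cases i <;> simp <;> rfl


open scoped commutatorElement in
lemma comm_K'_L' : ∀ x ∈ K' K L, ∀ y ∈ L' K L, x * y = y * x := by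
  rintro _ ⟨a, ha, rfl⟩ _ ⟨b, hb, rfl⟩
  have h1 : qm K L ⁅a, b⁆ = 1 := by
    rw [← MonoidHom.mem_ker, qm, QuotientGroup.ker_mk']
    exact Subgroup.commutator_mem_commutator ha hb
  have := h1
  rw [commutatorElement_def] at this
  simp only [map_mul, map_inv] at this
  have h2 := congrArg (· * qm K L b * qm K L a) this
  simpa [mul_assoc] using h2

lemma fh_piHat1_conj : ∀ (w : Monoid.CoprodI (fun i => ↥(Kv K L i))) (k : K' K L),
    fh K L w * ↑k * (fh K L w)⁻¹
      = fh K L (piHat (Kv K L) 1 w) * ↑k * (fh K L (piHat (Kv K L) 1 w))⁻¹ := by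
  have hr : (QuotientGroup.mk' (L' K L)).comp (fh K L)
      = (QuotientGroup.mk' (L' K L)).comp ((fh K L).comp (piHat (Kv K L) 1)) := by
    refine Monoid.CoprodI.ext_hom _ _ fun i => ?_
    refine MonoidHom.ext fun x => ?_
    simp only [MonoidHom.comp_apply, piHat_of]
    fin_cases i
    · simp
    · simp only [Fin.isValue, if_pos rfl, map_one]
      refine (QuotientGroup.eq_one_iff _).mpr ?_
      exact Subgroup.mem_map_of_mem _ x.2
    · simp
  intro w k
  have := DFunLike.congr_fun hr w
  simp only [MonoidHom.comp_apply, QuotientGroup.mk'_eq_mk'] at this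
  obtain ⟨z, hz, hzeq⟩ := this
  have hfw : fh K L w = fh K L (piHat (Kv K L) 1 w) * z⁻¹ := by
    rw [← hzeq]; group
  rw [hfw]
  have hc : z⁻¹ * ↑k = ↑k * z⁻¹ :=
    (comm_K'_L' K L _ k.2 _ (inv_mem hz)).symm
  rw [mul_assoc (fh K L (piHat (Kv K L) 1 w)) z⁻¹ ↑k, hc]
  group

lemma left_Φ_eq_Φ₂ (w : Monoid.CoprodI (fun i => ↥(Kv K L i))) :
    (((Φ K L) w).left : QG K L) = (((Φ₂ K L) w).left : QG K L) := by
  induction w using Monoid.CoprodI.induction_on with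
  | one => simp
  | of i m =>
    fin_cases i
    · rfl
    · rfl
    · rfl
  | mul x y hx hy =>
    rw [map_mul, map_mul, SemidirectProduct.mul_left, SemidirectProduct.mul_left]
    push_cast
    rw [MulAut.conjNormal_apply, MulAut.conjNormal_apply, hx, hy]
    have hrx : ((Φ K L) x).right = fh K L x := DFunLike.congr_fun (rightHom_Φ K L) x
    have hrx2 : ((Φ₂ K L) x).right = fh K L (piHat (Kv K L) 1 x) :=
      DFunLike.congr_fun (rightHom_Φ₂ K L) x
    rw [hrx, hrx2, fh_piHat1_conj K L x (((Φ₂ K L) y).left)]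

lemma left_Φ_mul_fh (w : Monoid.CoprodI (fun i => ↥(Kv K L i))) :
    (((Φ K L) w).left : QG K L) * fh K L w = fh K L (piHat (Kv K L) 0 w) := by
  induction w using Monoid.CoprodI.induction_on with
  | one => simp
  | of i m =>
    fin_cases i
    · show ((qm K L) ↑m)⁻¹ * _ = _
      rw [piHat_of, fh_of]
      simp
    · show (1 : QG K L) * _ = _
      rw [piHat_of]
      simp [fh_of]
    · show (1 : QG K L) * _ = _
      rw [piHat_of]
      simp [fh_of]
  | mul x y hx hy =>
    simp only [map_mul, SemidirectProduct.mul_left]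
    push_cast
    rw [MulAut.conjNormal_apply]
    have hrx : ((Φ K L) x).right = fh K L x := DFunLike.congr_fun (rightHom_Φ K L) x
    rw [hrx, ← hx, ← hy]
    group

end HigginsAux

/-- For normal subgroups `K, L` of `G`, the ternary Higgins commutator `H(K, L, ⊤)`
is contained in the commutator subgroup `⁅K, L⁆`. -/
theorem higgins_with_top_le_commutator {G : Type*} [Group G] (K L : Subgroup G)
    (hK : K.Normal) (hL : L.Normal) :
    higgins ![K, L, (⊤ : Subgroup G)] ≤ ⁅K, L⁆ := by
  haveI := hK; haveI := hL
  intro x hx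
  obtain ⟨w, hw, rfl⟩ := Subgroup.mem_map.mp hx
  have hw' : ∀ k, piHat ![K, L, (⊤ : Subgroup G)] k w = 1 := fun k =>
    MonoidHom.mem_ker.mp (Subgroup.mem_iInf.mp hw k)
  have h2 : HigginsAux.Φ₂ K L w = 1 := by
    have h := DFunLike.congr_fun (HigginsAux.Φ₂_piHat K L) w
    rw [MonoidHom.comp_apply] at h
    rw [← h, hw' 1, map_one]
  have h5 := HigginsAux.left_Φ_mul_fh K L w
  rw [hw' 0, map_one, HigginsAux.left_Φ_eq_Φ₂ K L w, h2] at h5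
  simp only [SemidirectProduct.one_left, OneMemClass.coe_one, one_mul] at h5
  exact (QuotientGroup.eq_one_iff _).mp h5
end

section
/- Let n ≥ 2 and let K₁, …, Kₙ be arbitrary subgroups of a group G; write K̄ᵢ for the normal closure of Kᵢ in G. Then H(K₁, …, Kₙ, ⊤) ≤ H(K̄₁, …, K̄ₙ), where ⊤ denotes G viewed as a subgroup of itself; that is, the (n+1)-fold Higgins commutator of K₁, …, Kₙ and G is contained in the n-fold Higgins commutator of the normal closures. -/
open Monoid

namespace Monoid.CoprodI

variable {ι : Type*} {M N P : ι → Type*} [∀ i, Monoid (M i)] [∀ i, Monoid (N i)]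
  [∀ i, Monoid (P i)]

def map (f : ∀ i, M i →* N i) : CoprodI M →* CoprodI N :=
  lift fun i => of.comp (f i)

@[simp]
theorem map_of (f : ∀ i, M i →* N i) {i : ι} (m : M i) : map f (of m) = of (f i m) :=
  lift_of _ m

theorem map_id : map (fun i => MonoidHom.id (M i)) = MonoidHom.id _ :=
  ext_hom _ _ fun i => by ext; simp

theorem map_comp_map (f : ∀ i, M i →* N i) (g : ∀ i, N i →* P i) :
    (map g).comp (map f) = map fun i => (g i).comp (f i) :=
  ext_hom _ _ fun i => by ext; simp

theorem map_map (f : ∀ i, M i →* N i) (g : ∀ i, N i →* P i) (x : CoprodI M) :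
    map g (map f x) = map (fun i => (g i).comp (f i)) x :=
  DFunLike.congr_fun (map_comp_map f g) x

def mapMulEquiv (e : ∀ i, M i ≃* N i) : CoprodI M ≃* CoprodI N :=
  MonoidHom.toMulEquiv (map fun i => (e i).toMonoidHom) (map fun i => (e i).symm.toMonoidHom)
    (by simp [map_comp_map, map_id]) (by simp [map_comp_map, map_id])

def mapAut : (∀ i, MulAut (M i)) →* MulAut (CoprodI M) where
  toFun := mapMulEquiv
  map_one' := MulEquiv.ext fun x => DFunLike.congr_fun map_id x
  map_mul' e e' := MulEquiv.ext fun x => by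
    rw [MulAut.mul_apply]
    exact (map_map (fun i => (e' i).toMonoidHom) (fun i => (e i).toMonoidHom) x).symm

@[simp]
theorem mapAut_apply (e : ∀ i, MulAut (M i)) (x : CoprodI M) :
    mapAut e x = map (fun i => (e i).toMonoidHom) x :=
  rfl

end Monoid.CoprodI

section

variable {G : Type*} [Group G] {ι : Type*}

def conjCoprodI (N : ι → Subgroup G) [∀ i, (N i).Normal] :
    G →* MulAut (CoprodI fun i => ↥(N i)) :=
  CoprodI.mapAut.comp (MonoidHom.pi fun _ => MulAut.conjNormal)

theorem conjCoprodI_toMonoidHom (N : ι → Subgroup G) [∀ i, (N i).Normal] (g : G) :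
    (conjCoprodI N g).toMonoidHom = CoprodI.map fun _ => (MulAut.conjNormal g).toMonoidHom :=
  rfl

theorem lift_subtype_comp_conjCoprodI (N : ι → Subgroup G) [∀ i, (N i).Normal] (g : G) :
    (CoprodI.lift fun i => (N i).subtype).comp (conjCoprodI N g).toMonoidHom =
      (MulAut.conj g).toMonoidHom.comp (CoprodI.lift fun i => (N i).subtype) :=
  CoprodI.ext_hom _ _ fun i => by ext; simp [conjCoprodI, MulAut.conjNormal_apply]

variable {n : ℕ}

theorem piHat_comp_map (N : Fin n → Subgroup G) (k : Fin n) (f : ∀ i, N i →* N i) :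
    (piHat N k).comp (CoprodI.map f) = (CoprodI.map f).comp (piHat N k) :=
  CoprodI.ext_hom _ _ fun i => by
    ext m
    by_cases h : i = k
    · subst h; simp [piHat]
    · simp [piHat, h]

end

section Semidirect

open SemidirectProduct

variable {G : Type*} [Group G] {n : ℕ} (N : Fin n → Subgroup G) [∀ i, (N i).Normal]

def semidirectLift : (CoprodI fun i => ↥(N i)) ⋊[conjCoprodI N] G →* G :=
  lift (CoprodI.lift fun i => (N i).subtype) (MonoidHom.id G) (lift_subtype_comp_conjCoprodI N)

def semidirectPiHat (k : Fin n) :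
    (CoprodI fun i => ↥(N i)) ⋊[conjCoprodI N] G →*
      (CoprodI fun i => ↥(N i)) ⋊[conjCoprodI N] G :=
  map (piHat N k) (MonoidHom.id G) fun g => by
    rw [conjCoprodI_toMonoidHom]
    exact piHat_comp_map N k _

variable {N} {K : Fin n → Subgroup G}

def snocTopToSemidirect (hKN : ∀ i, K i ≤ N i) :
    CoprodI (fun i => ↥(Fin.snoc (α := fun _ => Subgroup G) K ⊤ i)) →*
      (CoprodI fun i => ↥(N i)) ⋊[conjCoprodI N] G :=
  CoprodI.lift <| Fin.lastCases (inr.comp (Subgroup.subtype _))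
    fun j => inl.comp (CoprodI.of.comp (Subgroup.inclusion (by simpa using hKN j)))

theorem semidirectLift_comp_snocTopToSemidirect (hKN : ∀ i, K i ≤ N i) :
    (semidirectLift N).comp (snocTopToSemidirect hKN) =
      CoprodI.lift fun i => (Fin.snoc (α := fun _ => Subgroup G) K ⊤ i).subtype := by
  refine CoprodI.ext_hom _ _ fun i => ?_
  induction i using Fin.lastCases with
  | last => ext m; simp [semidirectLift, snocTopToSemidirect]
  | cast j => ext m; simp [semidirectLift, snocTopToSemidirect]

theorem semidirectPiHat_comp_snocTopToSemidirect (hKN : ∀ i, K i ≤ N i) (k : Fin n) :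
    (semidirectPiHat N k).comp (snocTopToSemidirect hKN) =
      (snocTopToSemidirect hKN).comp
        (piHat (Fin.snoc (α := fun _ => Subgroup G) K ⊤) k.castSucc) := by
  refine CoprodI.ext_hom _ _ fun i => ?_
  induction i using Fin.lastCases with
  | last =>
    ext m <;> simp [semidirectPiHat, snocTopToSemidirect, piHat, (Fin.castSucc_lt_last k).ne']
  | cast j =>
    by_cases h : j = k
    · subst h; ext m <;> simp [semidirectPiHat, snocTopToSemidirect, piHat]
    · ext m <;> simp [semidirectPiHat, snocTopToSemidirect, piHat, h]

end Semidirect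

section Higgins

open SemidirectProduct

variable {G : Type*} [Group G] {n : ℕ} {N K : Fin n → Subgroup G} [∀ i, (N i).Normal]

theorem exists_mem_cosmash_snocTopToSemidirect_eq_inl (hn : n ≠ 0) (hKN : ∀ i, K i ≤ N i)
    {x : CoprodI fun i => ↥(Fin.snoc (α := fun _ => Subgroup G) K ⊤ i)}
    (hx : x ∈ cosmash (Fin.snoc (α := fun _ => Subgroup G) K ⊤)) :
    ∃ y ∈ cosmash N, snocTopToSemidirect hKN x = inl y := by
  have hΦx (k : Fin n) : semidirectPiHat N k (snocTopToSemidirect hKN x) = 1 := by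
    rw [← MonoidHom.comp_apply, semidirectPiHat_comp_snocTopToSemidirect, MonoidHom.comp_apply,
      MonoidHom.mem_ker.mp (Subgroup.mem_iInf.mp hx k.castSucc), map_one]
  obtain ⟨y, hy⟩ : snocTopToSemidirect hKN x ∈ (inl : _ →* _ ⋊[conjCoprodI N] G).range := by
    rw [range_inl_eq_ker_rightHom, MonoidHom.mem_ker]
    exact congrArg right (hΦx ⟨0, Nat.pos_of_ne_zero hn⟩)
  refine ⟨y, Subgroup.mem_iInf.mpr fun k => ?_, hy.symm⟩
  have hk := hΦx k
  rwa [← hy, semidirectPiHat, map_inl, ← inl.map_one, inl_inj] at hk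

theorem higgins_snoc_top_le_of_le_normal (hn : n ≠ 0) (hKN : ∀ i, K i ≤ N i) :
    higgins (Fin.snoc (α := fun _ => Subgroup G) K ⊤) ≤ higgins N := by
  rintro _ ⟨x, hx, rfl⟩
  obtain ⟨y, hy, hxy⟩ := exists_mem_cosmash_snocTopToSemidirect_eq_inl hn hKN hx
  refine ⟨y, hy, ?_⟩
  rw [← semidirectLift_comp_snocTopToSemidirect hKN, MonoidHom.comp_apply, hxy, semidirectLift,
    lift_inl]

end Higgins

/-- For `n ≥ 2` and arbitrary subgroups `K₁, …, Kₙ` of `G`, the `(n+1)`-fold Higgins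
commutator `H(K₁, …, Kₙ, ⊤)` is contained in the `n`-fold Higgins commutator of the
normal closures `H(K̄₁, …, K̄ₙ)`. -/
theorem higgins_top_le_higgins_normalClosure {G : Type*} [Group G] {n : ℕ} (hn : 2 ≤ n)
    (K : Fin n → Subgroup G) :
    higgins (Fin.snoc K (⊤ : Subgroup G)) ≤
      higgins (fun i => Subgroup.normalClosure ((K i : Set G))) :=
  higgins_snoc_top_le_of_le_normal (by omega) fun _ => Subgroup.le_normalClosure
end

section
/- Let n ≥ 2 and let K₁, …, Kₙ be normal subgroups of a group G. Then H(K₁, …, Kₙ, ⊤) ≤ H(K₁, …, Kₙ), where ⊤ denotes G viewed as a subgroup of itself; that is, the (n+1)-fold Higgins commutator [K₁,…,Kₙ,G] is contained in the n-fold Higgins commutator [K₁,…,Kₙ]. -/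
/-!
The free product of `K₁, …, Kₙ, G` maps to `(K₁ ∗ ⋯ ∗ Kₙ) ⋊ G`, where `G` acts by conjugation
(this is where normality enters), sending each `Kⱼ` to the left factor and `G` to the right one.
An element `c` of the co-smash product is killed by `π̂₁`, which leaves the factor `G` alone, so
the image of `c` has trivial `G`-component and comes from some `p ∈ K₁ ∗ ⋯ ∗ Kₙ`. The maps `π̂ₖ`,
`k ≤ n`, extend to the semidirect product compatibly, hence `p ∈ K₁ ◇ ⋯ ◇ Kₙ`; and multiplying
out in `G` shows that `p` and `c` have the same image there.
-/

open Monoid SemidirectProduct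

namespace Monoid.CoprodI

variable {ι H : Type*} [Group H] {M : ι → Type*} [∀ i, Monoid (M i)]

def mapMulAutHom (φ : ∀ i, H →* MulAut (M i)) (h : H) : CoprodI M →* CoprodI M :=
  lift fun i => of.comp (φ i h).toMonoidHom

@[simp]
theorem mapMulAutHom_of (φ : ∀ i, H →* MulAut (M i)) (h : H) {i : ι} (m : M i) :
    mapMulAutHom φ h (of m) = of (φ i h m) :=
  lift_of _ _

theorem mapMulAutHom_mul (φ : ∀ i, H →* MulAut (M i)) (g h : H) :
    mapMulAutHom φ (g * h) = (mapMulAutHom φ g).comp (mapMulAutHom φ h) :=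
  ext_hom _ _ fun i => MonoidHom.ext fun m => by simp [MulAut.mul_apply]

theorem mapMulAutHom_one (φ : ∀ i, H →* MulAut (M i)) :
    mapMulAutHom φ 1 = MonoidHom.id _ :=
  ext_hom _ _ fun i => MonoidHom.ext fun m => by simp

def mapMulAut (φ : ∀ i, H →* MulAut (M i)) : H →* MulAut (CoprodI M) where
  toFun h := MonoidHom.toMulEquiv (mapMulAutHom φ h) (mapMulAutHom φ h⁻¹)
    (by rw [← mapMulAutHom_mul, inv_mul_cancel, mapMulAutHom_one])
    (by rw [← mapMulAutHom_mul, mul_inv_cancel, mapMulAutHom_one])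
  map_one' := MulEquiv.ext fun x => by simp [mapMulAutHom_one]
  map_mul' g h := MulEquiv.ext fun x => by simp [mapMulAutHom_mul]

@[simp]
theorem mapMulAut_apply_of (φ : ∀ i, H →* MulAut (M i)) (h : H) {i : ι} (m : M i) :
    mapMulAut φ h (of m) = of (φ i h m) :=
  mapMulAutHom_of φ h m

end Monoid.CoprodI

namespace Higgins

variable {G : Type*} [Group G]

theorem mem_cosmash_iff {n : ℕ} {K : Fin n → Subgroup G} {x : CoprodI fun i => ↥(K i)} :
    x ∈ cosmash K ↔ ∀ k, piHat K k x = 1 :=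
  Subgroup.mem_iInf

theorem piHat_of {n : ℕ} (K : Fin n → Subgroup G) (k : Fin n) {i : Fin n} (x : K i) :
    piHat K k (CoprodI.of (M := fun i => ↥(K i)) x) =
      if i = k then 1 else CoprodI.of (M := fun i => ↥(K i)) x := by
  simp only [piHat, CoprodI.lift_of]
  split_ifs <;> rfl

section Conj

variable {ι : Type*} (K : ι → Subgroup G) [∀ i, (K i).Normal]

def conjAut : G →* MulAut (CoprodI fun i => ↥(K i)) :=
  CoprodI.mapMulAut fun _ => MulAut.conjNormal

@[simp]
theorem conjAut_apply_of (g : G) {i : ι} (x : K i) :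
    conjAut K g (CoprodI.of (M := fun i => ↥(K i)) x) =
      CoprodI.of (M := fun i => ↥(K i)) (MulAut.conjNormal g x) :=
  CoprodI.mapMulAut_apply_of _ _ _

def mulHom : (CoprodI fun i => ↥(K i)) ⋊[conjAut K] G →* G :=
  lift (CoprodI.lift fun i => (K i).subtype) (MonoidHom.id G) fun g =>
    CoprodI.ext_hom _ _ fun _ => MonoidHom.ext fun x => by
      simp [conjAut, MulAut.conjNormal_apply]

end Conj

variable {n : ℕ} (K : Fin n → Subgroup G)

abbrev snocTop : Fin (n + 1) → Subgroup G := Fin.snoc K ⊤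

theorem snocTop_castSucc (j : Fin n) : snocTop K j.castSucc = K j :=
  Fin.snoc_castSucc ..

variable [∀ i, (K i).Normal]

def piHatExt (k : Fin n) :
    (CoprodI fun i => ↥(K i)) ⋊[conjAut K] G →* (CoprodI fun i => ↥(K i)) ⋊[conjAut K] G :=
  lift (inl.comp (piHat K k)) inr fun g =>
    CoprodI.ext_hom _ _ fun i => MonoidHom.ext fun x => by
      by_cases h : i = k
      · subst h
        simp [piHat_of]
      · simp only [MonoidHom.comp_apply, MulEquiv.coe_toMonoidHom, MulAut.conj_apply]
        rw [conjAut_apply_of, piHat_of, piHat_of, if_neg h, if_neg h, ← conjAut_apply_of,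
          inl_aut, map_inv]

def snocHom : CoprodI (fun i => ↥(snocTop K i)) →* (CoprodI fun i => ↥(K i)) ⋊[conjAut K] G :=
  CoprodI.lift <| Fin.lastCases (inr.comp (Subgroup.subtype _)) fun j =>
    inl.comp (CoprodI.of.comp (Subgroup.inclusion (snocTop_castSucc K j).le))

@[simp]
theorem snocHom_of_castSucc (j : Fin n) (x : snocTop K j.castSucc) :
    snocHom K (CoprodI.of (M := fun i => ↥(snocTop K i)) x) =
      inl (CoprodI.of (M := fun i => ↥(K i))
        (Subgroup.inclusion (snocTop_castSucc K j).le x)) := by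
  simp [snocHom]

@[simp]
theorem snocHom_of_last (x : snocTop K (Fin.last n)) :
    snocHom K (CoprodI.of (M := fun i => ↥(snocTop K i)) x) = inr (x : G) := by
  simp [snocHom]

@[simp]
theorem piHatExt_inl (k : Fin n) (p : CoprodI fun i => ↥(K i)) :
    piHatExt K k (inl p) = inl (piHat K k p) :=
  lift_inl ..

@[simp]
theorem mulHom_inl (p : CoprodI fun i => ↥(K i)) :
    mulHom K (inl p) = CoprodI.lift (fun i => (K i).subtype) p :=
  lift_inl ..

theorem piHatExt_comp_snocHom (k : Fin n) :
    (piHatExt K k).comp (snocHom K) = (snocHom K).comp (piHat (snocTop K) k.castSucc) :=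
  CoprodI.ext_hom _ _ fun i => MonoidHom.ext fun x => by
    induction i using Fin.lastCases with
    | last => simp [piHat_of, (Fin.castSucc_lt_last k).ne', piHatExt]
    | cast j =>
      by_cases h : j = k
      · subst h
        simp [piHat_of]
      · simp [piHat_of, h]

theorem rightHom_comp_snocHom_comp_piHat (k : Fin n) :
    (rightHom.comp (snocHom K)).comp (piHat (snocTop K) k.castSucc) = rightHom.comp (snocHom K) :=
  CoprodI.ext_hom _ _ fun i => MonoidHom.ext fun x => by
    induction i using Fin.lastCases with
    | last => simp [piHat_of, (Fin.castSucc_lt_last k).ne']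
    | cast j => by_cases h : j = k <;> simp [piHat_of, h]

theorem mulHom_comp_snocHom :
    (mulHom K).comp (snocHom K) = CoprodI.lift fun i => (snocTop K i).subtype :=
  CoprodI.ext_hom _ _ fun i => MonoidHom.ext fun x => by
    induction i using Fin.lastCases with
    | last => simp [mulHom]
    | cast j => simp

end Higgins

open Higgins

/-- For `n ≥ 2` and normal subgroups `K₁, …, Kₙ` of `G`, the `(n+1)`-fold Higgins
commutator `H(K₁, …, Kₙ, ⊤)` is contained in the `n`-fold Higgins commutator
`H(K₁, …, Kₙ)`. -/
theorem higgins_top_le_higgins {G : Type*} [Group G] {n : ℕ} (hn : 2 ≤ n)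
    (K : Fin n → Subgroup G) (hK : ∀ i, (K i).Normal) :
    higgins (Fin.snoc K (⊤ : Subgroup G)) ≤ higgins K := by
  rintro _ ⟨c, hc : c ∈ cosmash (snocTop K), rfl⟩
  rw [mem_cosmash_iff] at hc
  obtain ⟨p, hp⟩ : snocHom K c ∈ (inl (φ := conjAut K)).range := by
    rw [range_inl_eq_ker_rightHom, MonoidHom.mem_ker, ← MonoidHom.comp_apply,
      ← rightHom_comp_snocHom_comp_piHat K ⟨0, by omega⟩, MonoidHom.comp_apply, hc, map_one]
  refine ⟨p, mem_cosmash_iff.mpr fun k => inl_injective (G := G) (φ := conjAut K) ?_, ?_⟩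
  · calc inl (piHat K k p) = piHatExt K k (snocHom K c) := by rw [← hp, piHatExt_inl]
      _ = snocHom K (piHat _ k.castSucc c) := DFunLike.congr_fun (piHatExt_comp_snocHom K k) c
      _ = 1 := by rw [hc, map_one]
  · calc CoprodI.lift (fun i => (K i).subtype) p
        = mulHom K (snocHom K c) := by rw [← hp, mulHom_inl]
      _ = _ := DFunLike.congr_fun (mulHom_comp_snocHom K) c
end

section
/- Let n ≥ 3 and let K₁, …, Kₙ be normal subgroups of a group G. Then the n-fold Higgins commutator decomposes as a join of left-nested binary commutator subgroups over all permutations: H(K₁, …, Kₙ) = ⨆_{σ ∈ Equiv.Perm (Fin n)} ⁅⋯⁅⁅K_{σ(1)}, K_{σ(2)}⁆, K_{σ(3)}⁆, …, K_{σ(n)}⁆. -/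
/-- The left-nested iterated commutator subgroup `⁅⋯⁅⁅K₁,K₂⁆,K₃⁆, …, Kₙ⁆`. -/
def nestedCommutator {G : Type*} [Group G] : {n : ℕ} → (Fin n → Subgroup G) → Subgroup G
  | 0, _ => ⊥
  | _ + 1, K => (List.ofFn fun i => K i.succ).foldl (fun A B => ⁅A, B⁆) (K 0)

/-!
Write `D S` for the join of the nested commutators `⁅⋯⁅K i₁, K i₂⁆, …, K iₘ⁆` over the words
using every index in `S`. The three subgroups lemma gives `⁅D S, D T⁆ ≤ D (S ∪ T)`. An element
`x` of the free product gives the cube `U ↦ κ (x with the factors in U deleted)` over the subsets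
of indices. Call a cube coherent if each of its iterated differences in the directions of a word
`w` has values in `D w`. Cubes of generators are coherent, and the commutator estimate makes
coherent cubes closed under products, since the differences of products, inverses and
commutators are again built from differences of lower order with the expected degrees. For `x`
in the co-smash product the cube is `κ x` at `∅` and `1` elsewhere, so `κ x` is its difference
in all directions and lies in `D univ`; removing repetitions from a word only enlarges its
nested commutator, and a word without repetitions using every index is a permutation.
Conversely, every `π̂ₖ` kills the nested commutator of the free factors along a permutation.
-/

namespace Subgroup

variable {G : Type*} [Group G]

theorem commutator_le_iff_map_le_centralizer (N : Subgroup G) [N.Normal] {H₁ H₂ : Subgroup G} :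
    ⁅H₁, H₂⁆ ≤ N ↔
      H₁.map (QuotientGroup.mk' N) ≤ centralizer (H₂.map (QuotientGroup.mk' N)) := by
  rw [← commutator_eq_bot_iff_le_centralizer, ← map_commutator, map_eq_bot_iff,
    QuotientGroup.ker_mk']

theorem iSup_commutator_le {ι : Sort*} {N : Subgroup G} [N.Normal] {f : ι → Subgroup G}
    {H : Subgroup G} (h : ∀ i, ⁅f i, H⁆ ≤ N) : ⁅⨆ i, f i, H⁆ ≤ N := by
  simp_rw [commutator_le_iff_map_le_centralizer, map_iSup] at h ⊢
  exact iSup_le h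

theorem commutator_iSup_le {ι : Sort*} {N : Subgroup G} [N.Normal] {H : Subgroup G}
    {f : ι → Subgroup G} (h : ∀ i, ⁅H, f i⁆ ≤ N) : ⁅H, ⨆ i, f i⁆ ≤ N := by
  rw [commutator_comm]
  exact iSup_commutator_le fun i => commutator_comm H (f i) ▸ h i

theorem commutator_commutator_le_of_rotate {N : Subgroup G} [N.Normal] {H₁ H₂ H₃ : Subgroup G}
    (h₁ : ⁅⁅H₂, H₃⁆, H₁⁆ ≤ N) (h₂ : ⁅⁅H₃, H₁⁆, H₂⁆ ≤ N) : ⁅⁅H₁, H₂⁆, H₃⁆ ≤ N := by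
  simp only [← QuotientGroup.ker_mk' N, ← map_eq_bot_iff, map_commutator] at h₁ h₂ ⊢
  exact commutator_commutator_eq_bot_of_rotate h₁ h₂

end Subgroup

namespace HigginsCommutator

open Subgroup
open scoped commutatorElement

variable {G : Type*} [Group G] {ι : Type*}

section ListCommutator

variable (K : ι → Subgroup G)

def foldCommutator (A : Subgroup G) (w : List ι) : Subgroup G :=
  w.foldl (fun X j => ⁅X, K j⁆) A

def listCommutator : List ι → Subgroup G
  | [] => ⊥
  | i :: w => foldCommutator K (K i) w

theorem foldCommutator_cons (A : Subgroup G) (j : ι) (w : List ι) :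
    foldCommutator K A (j :: w) = foldCommutator K ⁅A, K j⁆ w := rfl

theorem listCommutator_cons (i : ι) (w : List ι) :
    listCommutator K (i :: w) = foldCommutator K (K i) w := rfl

@[simp] theorem listCommutator_singleton (i : ι) : listCommutator K [i] = K i := rfl

theorem listCommutator_append_singleton {w : List ι} (hw : w ≠ []) (j : ι) :
    listCommutator K (w ++ [j]) = ⁅listCommutator K w, K j⁆ := by
  obtain ⟨i, w, rfl⟩ := List.exists_cons_of_ne_nil hw
  simp [listCommutator, foldCommutator, List.foldl_append]

theorem map_foldCommutator {H : Type*} [Group H] (f : G →* H) (A : Subgroup G) (w : List ι) :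
    (foldCommutator K A w).map f = foldCommutator (fun i => (K i).map f) (A.map f) w := by
  induction w generalizing A with
  | nil => rfl
  | cons j w ih => rw [foldCommutator_cons, foldCommutator_cons, ih, map_commutator]

theorem map_listCommutator {H : Type*} [Group H] (f : G →* H) (w : List ι) :
    (listCommutator K w).map f = listCommutator (fun i => (K i).map f) w := by
  cases w with
  | nil => exact map_bot f
  | cons i w => exact map_foldCommutator K f (K i) w

theorem listCommutator_eq_bot {k : ι} (hk : K k = ⊥) {w : List ι} (hw : k ∈ w) :
    listCommutator K w = ⊥ := by
  have fold_bot : ∀ w, foldCommutator K ⊥ w = ⊥ := fun w => by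
    induction w with
    | nil => rfl
    | cons j w ih => rwa [foldCommutator_cons, commutator_bot_left]
  have fold_eq_bot : ∀ {w} A, k ∈ w → foldCommutator K A w = ⊥ := fun {w} => by
    induction w with
    | nil => simp
    | cons j w ih =>
      rintro A (_ | ⟨_, hk'⟩)
      · rw [foldCommutator_cons, hk, commutator_bot_right, fold_bot]
      · exact ih _ hk'
  obtain (_ | ⟨_, hw⟩) := hw
  · rw [listCommutator_cons, hk, fold_bot]
  · exact fold_eq_bot _ hw

theorem listCommutator_ofFn {n : ℕ} (σ : Fin n → ι) :
    listCommutator K (List.ofFn σ) = nestedCommutator (fun i => K (σ i)) := by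
  cases n with
  | zero => rfl
  | succ m =>
    rw [List.ofFn_succ, listCommutator_cons, nestedCommutator, foldCommutator,
      List.ofFn_comp' _ K, List.foldl_map]

variable {K}

theorem foldCommutator_normal (hK : ∀ i, (K i).Normal) {A : Subgroup G} (hA : A.Normal)
    (w : List ι) : (foldCommutator K A w).Normal := by
  induction w generalizing A with
  | nil => exact hA
  | cons j w ih => have := hK j; exact ih inferInstance

theorem listCommutator_normal (hK : ∀ i, (K i).Normal) (w : List ι) :
    (listCommutator K w).Normal := by
  cases w with
  | nil => exact normal_bot
  | cons i w => exact foldCommutator_normal hK (hK i) w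

theorem foldCommutator_le_of_sublist (hK : ∀ i, (K i).Normal) {A B : Subgroup G}
    (hA : A.Normal) (hAB : A ≤ B) {u v : List ι} (huv : u.Sublist v) :
    foldCommutator K A v ≤ foldCommutator K B u := by
  induction v generalizing A B u with
  | nil => rw [List.sublist_nil.mp huv]; exact hAB
  | cons k v ih =>
    have := hK k
    rcases List.sublist_cons_iff.mp huv with hu | ⟨u, rfl, hu⟩
    · exact ih inferInstance ((commutator_le_left A _).trans hAB) hu
    · exact ih inferInstance (commutator_mono hAB le_rfl) hu

theorem foldCommutator_le_listCommutator (hK : ∀ i, (K i).Normal) {A : Subgroup G}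
    (hA : A.Normal) {u v : List ι} (hu : u ≠ []) (huv : u.Sublist v) :
    foldCommutator K A v ≤ listCommutator K u := by
  induction v generalizing A u with
  | nil => exact absurd (List.sublist_nil.mp huv) hu
  | cons k v ih =>
    have := hK k
    rcases List.sublist_cons_iff.mp huv with hu' | ⟨u, rfl, hu'⟩
    · exact ih inferInstance hu hu'
    · exact foldCommutator_le_of_sublist hK inferInstance (commutator_le_right A _) hu'

theorem listCommutator_anti (hK : ∀ i, (K i).Normal) {u v : List ι} (hu : u ≠ [])
    (huv : u.Sublist v) : listCommutator K v ≤ listCommutator K u := by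
  cases v with
  | nil => exact absurd (List.sublist_nil.mp huv) hu
  | cons i v =>
    rcases List.sublist_cons_iff.mp huv with hu' | ⟨u, rfl, hu'⟩
    · exact foldCommutator_le_listCommutator hK (hK i) hu hu'
    · exact foldCommutator_le_of_sublist hK (hK i) le_rfl hu'

end ListCommutator

section SupportFiltration

variable [DecidableEq ι] (K : ι → Subgroup G)

def supportFiltration (S : Finset ι) : Subgroup G :=
  ⨆ w : {w : List ι // w ≠ [] ∧ S ⊆ w.toFinset}, listCommutator K w

variable {K}

theorem listCommutator_le_supportFiltration {w : List ι} (hw : w ≠ []) {S : Finset ι}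
    (hS : S ⊆ w.toFinset) : listCommutator K w ≤ supportFiltration K S :=
  le_iSup_of_le ⟨w, hw, hS⟩ le_rfl

theorem supportFiltration_normal (hK : ∀ i, (K i).Normal) (S : Finset ι) :
    (supportFiltration K S).Normal :=
  have := fun w => listCommutator_normal hK w
  iSup_normal _

theorem supportFiltration_anti : Antitone (supportFiltration K) := fun _ _ h =>
  iSup_le fun w => listCommutator_le_supportFiltration w.2.1 (h.trans w.2.2)

theorem le_supportFiltration_singleton (i : ι) : K i ≤ supportFiltration K {i} :=
  listCommutator_le_supportFiltration (w := [i]) (List.cons_ne_nil _ _) (by simp)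

theorem commutator_supportFiltration_le_insert (hK : ∀ i, (K i).Normal) (S : Finset ι)
    (j : ι) : ⁅supportFiltration K S, K j⁆ ≤ supportFiltration K (insert j S) := by
  have := supportFiltration_normal hK (insert j S)
  refine iSup_commutator_le fun w => ?_
  rw [← listCommutator_append_singleton K w.2.1]
  refine listCommutator_le_supportFiltration (by simp) ?_
  simpa [Finset.insert_subset_iff] using w.2.2.trans (by simp)

theorem commutator_listCommutator_le (hK : ∀ i, (K i).Normal) (u : List ι) :
    ∀ w : List ι, ⁅listCommutator K w, listCommutator K u⁆ ≤
      supportFiltration K (w.toFinset ∪ u.toFinset) := by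
  induction u using List.reverseRecOn with
  | nil => intro w; exact (commutator_bot_right _).trans_le bot_le
  | append_singleton u i ih =>
    intro w
    rcases eq_or_ne w [] with rfl | hw
    · simp [listCommutator, commutator_bot_left]
    rcases eq_or_ne u [] with rfl | hu
    · rw [List.nil_append, listCommutator_singleton, ← listCommutator_append_singleton K hw]
      exact listCommutator_le_supportFiltration (by simp) (by simp)
    have := supportFiltration_normal hK (w.toFinset ∪ (u ++ [i]).toFinset)
    rw [listCommutator_append_singleton K hu, commutator_comm]
    refine commutator_commutator_le_of_rotate ?_ ?_
    · rw [commutator_comm (K i), ← listCommutator_append_singleton K hw]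
      refine (ih (w ++ [i])).trans (supportFiltration_anti ?_)
      intro x
      simp only [Finset.mem_union, List.toFinset_append, List.mem_toFinset, List.toFinset_cons,
        List.toFinset_nil]
      tauto
    · refine (commutator_mono (ih w) le_rfl).trans ?_
      refine (commutator_supportFiltration_le_insert hK _ i).trans (supportFiltration_anti ?_)
      intro x
      simp only [Finset.mem_insert, Finset.mem_union, List.toFinset_append, List.mem_toFinset,
        List.toFinset_cons, List.toFinset_nil]
      tauto

theorem commutator_supportFiltration_le (hK : ∀ i, (K i).Normal) (S T : Finset ι) :
    ⁅supportFiltration K S, supportFiltration K T⁆ ≤ supportFiltration K (S ∪ T) := by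
  have := supportFiltration_normal hK (S ∪ T)
  refine iSup_commutator_le fun w => commutator_iSup_le fun u => ?_
  exact (commutator_listCommutator_le hK u w).trans
    (supportFiltration_anti (Finset.union_subset_union w.2.2 u.2.2))

theorem exists_perm_ofFn_eq {n : ℕ} {l : List (Fin n)} (hl : l.Nodup) (h : ∀ i, i ∈ l) :
    ∃ σ : Equiv.Perm (Fin n), List.ofFn σ = l := by
  let e := hl.getEquivOfForallMemList l h
  have hlen : l.length = n := Fin.equiv_iff_eq.mp ⟨e⟩
  refine ⟨(finCongr hlen.symm).trans e, ?_⟩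
  exact ((List.ofFn_congr hlen l.get).symm).trans (List.ofFn_get l)

theorem supportFiltration_univ_le {n : ℕ} {K : Fin n → Subgroup G} (hK : ∀ i, (K i).Normal) :
    supportFiltration K Finset.univ ≤
      ⨆ σ : Equiv.Perm (Fin n), nestedCommutator (fun i => K (σ i)) := by
  refine iSup_le fun ⟨w, hw, hS⟩ => ?_
  have hmem : ∀ i, i ∈ w.dedup := fun i => List.mem_dedup.mpr (List.mem_toFinset.mp (hS (by simp)))
  obtain ⟨σ, hσ⟩ := exists_perm_ofFn_eq (List.nodup_dedup w) hmem
  refine (listCommutator_anti hK ?_ (List.dedup_sublist w)).trans (le_iSup_of_le σ ?_)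
  · exact fun h => hw ((List.dedup_eq_nil w).mp h)
  · rw [← hσ, listCommutator_ofFn]

end SupportFiltration

section Cube

variable [DecidableEq ι]

def shift (j : ι) : (Finset ι → G) →* (Finset ι → G) :=
  MonoidHom.pi fun U => Pi.evalMonoidHom (fun _ => G) (insert j U)

@[simp] theorem shift_apply (j : ι) (c : Finset ι → G) (U : Finset ι) :
    shift j c U = c (insert j U) := rfl

def cubeDiff (j : ι) (c : Finset ι → G) : Finset ι → G := (shift j c)⁻¹ * c

def cubeDiffs (w : List ι) (c : Finset ι → G) : Finset ι → G := w.foldr cubeDiff c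

theorem cubeDiffs_cons (j : ι) (w : List ι) (c : Finset ι → G) :
    cubeDiffs (j :: w) c = cubeDiff j (cubeDiffs w c) := rfl

theorem shift_eq_mul_inv_cubeDiff (j : ι) (c : Finset ι → G) :
    shift j c = c * (cubeDiff j c)⁻¹ := by
  simp [cubeDiff]

/-- Every factor on the right is a conjugate of a commutator having `x` or `y` as an entry. -/
theorem commutator_mul_mul_eq {M : Type*} [Group M] (a b x y : M) :
    ⁅a * x, b * y⁆⁻¹ * ⁅a, b⁆ = (b * ⁅a, y⁆ * b⁻¹)⁻¹ *
      (⁅a, b⁆⁻¹ * (a * (⁅x, b⁆ * (b * ⁅x, y⁆ * b⁻¹)) * a⁻¹)⁻¹ * ⁅a, b⁆⁻¹⁻¹) := by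
  simp only [commutatorElement_def]; group

variable (D : Finset ι → Subgroup G)

def IsCoherent (c : Finset ι → G) : Prop :=
  ∀ w U, cubeDiffs w c U ∈ D w.toFinset

/-- Closed under `cubeDiff j` with the degree raised by `j` (`Derived.diff`), which is what makes
coherence multiplicative. -/
inductive Derived : Finset ι → (Finset ι → G) → Prop
  | cubeDiffs {c : Finset ι → G} (hc : IsCoherent D c) (w : List ι) :
      Derived w.toFinset (cubeDiffs w c)
  | mul {S : Finset ι} {c c' : Finset ι → G} : Derived S c → Derived S c' → Derived S (c * c')
  | inv {S : Finset ι} {c : Finset ι → G} : Derived S c → Derived S c⁻¹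
  | commutator {S T : Finset ι} {c c' : Finset ι → G} :
      Derived S c → Derived T c' → Derived (S ∪ T) ⁅c, c'⁆
  | mono {S S' : Finset ι} {c : Finset ι → G} : S' ⊆ S → Derived S c → Derived S' c

variable {D}

namespace Derived

theorem conj {S T : Finset ι} {c c' : Finset ι → G} (hc : Derived D S c) (hc' : Derived D T c') :
    Derived D S (c' * c * c'⁻¹) := by
  have h : c' * c * c'⁻¹ = c * ⁅c⁻¹, c'⁆ := by simp only [commutatorElement_def]; group
  exact h ▸ hc.mul (mono Finset.subset_union_left (hc.inv.commutator hc'))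

theorem diff {S : Finset ι} {c : Finset ι → G} (hc : Derived D S c) (j : ι) :
    Derived D (insert j S) (cubeDiff j c) := by
  induction hc with
  | cubeDiffs hc w =>
    have h := cubeDiffs hc (j :: w)
    rwa [List.toFinset_cons] at h
  | @mul S c c' hc hc' ih ih' =>
    have h : cubeDiff j (c * c') = (c' * (cubeDiff j c')⁻¹)⁻¹ * cubeDiff j c *
        (c' * (cubeDiff j c')⁻¹)⁻¹⁻¹ * cubeDiff j c' := by
      simp only [cubeDiff, map_mul]; group
    exact h ▸ (ih.conj (hc'.mul (mono (Finset.subset_insert j S) ih').inv).inv).mul ih'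
  | @inv S c hc ih =>
    have h : cubeDiff j c⁻¹ = c * (cubeDiff j c)⁻¹ * c⁻¹ := by
      simp only [cubeDiff, map_inv]; group
    exact h ▸ ih.inv.conj hc
  | @commutator S T c c' hc hc' ih ih' =>
    have h : cubeDiff j ⁅c, c'⁆ = ⁅c * (cubeDiff j c)⁻¹, c' * (cubeDiff j c')⁻¹⁆⁻¹ * ⁅c, c'⁆ := by
      rw [cubeDiff, map_commutatorElement, shift_eq_mul_inv_cubeDiff j c,
        shift_eq_mul_inv_cubeDiff j c']
    rw [h, commutator_mul_mul_eq]
    have hS : insert j (S ∪ T) ⊆ S ∪ insert j T := by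
      intro x; simp only [Finset.mem_insert, Finset.mem_union]; tauto
    have hT : insert j (S ∪ T) ⊆ insert j S ∪ T := by
      intro x; simp only [Finset.mem_insert, Finset.mem_union]; tauto
    have hST : insert j (S ∪ T) ⊆ insert j S ∪ insert j T := by
      intro x; simp only [Finset.mem_insert, Finset.mem_union]; tauto
    refine ((mono hS (hc.commutator ih'.inv)).conj hc').inv.mul (conj ?_ (hc.commutator hc').inv)
    refine ((mono hT (ih.inv.commutator hc')).mul ?_).conj hc |>.inv
    exact (mono hST (ih.inv.commutator ih'.inv)).conj hc'
  | mono hS _ ih => exact mono (Finset.insert_subset_insert _ hS) ih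

theorem apply_mem (hD_anti : Antitone D) (hD_comm : ∀ S T, ⁅D S, D T⁆ ≤ D (S ∪ T))
    {S : Finset ι} {c : Finset ι → G} (hc : Derived D S c) (U : Finset ι) : c U ∈ D S := by
  induction hc with
  | cubeDiffs hc w => exact hc w U
  | mul _ _ ih ih' => exact mul_mem ih ih'
  | inv _ ih => exact inv_mem ih
  | commutator _ _ ih ih' => exact hD_comm _ _ (commutator_mem_commutator ih ih')
  | mono hS _ ih => exact hD_anti hS ih

end Derived

theorem isCoherent_one : IsCoherent D (1 : Finset ι → G) := by
  intro w U
  have h : cubeDiffs w (1 : Finset ι → G) = 1 := by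
    induction w with
    | nil => rfl
    | cons j w ih => simp [cubeDiffs_cons, ih, cubeDiff]
  rw [h]
  exact one_mem _

theorem IsCoherent.mul (hD_anti : Antitone D) (hD_comm : ∀ S T, ⁅D S, D T⁆ ≤ D (S ∪ T))
    {c c' : Finset ι → G} (hc : IsCoherent D c) (hc' : IsCoherent D c') :
    IsCoherent D (c * c') := by
  intro w
  refine Derived.apply_mem hD_anti hD_comm ?_
  induction w with
  | nil => exact (Derived.cubeDiffs hc []).mul (Derived.cubeDiffs hc' [])
  | cons j w ih => rw [List.toFinset_cons]; exact ih.diff j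

end Cube

section FreeProduct

open Monoid.CoprodI

variable [DecidableEq ι]

def cornerCube (i : ι) : G →* (Finset ι → G) :=
  MonoidHom.pi fun U => if i ∈ U then 1 else MonoidHom.id G

theorem cornerCube_apply (i : ι) (g : G) (U : Finset ι) :
    cornerCube i g U = if i ∈ U then 1 else g := by
  simp only [cornerCube, MonoidHom.pi_apply]
  split_ifs <;> rfl

theorem cubeDiff_cornerCube (j i : ι) (g : G) :
    cubeDiff j (cornerCube i g) = if j = i then cornerCube i g else 1 := by
  funext U
  by_cases h : j = i
  · subst h; simp [cubeDiff, cornerCube_apply]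
  · by_cases hU : i ∈ U <;> simp [cubeDiff, cornerCube_apply, h, Ne.symm h, hU]

theorem isCoherent_cornerCube {D : Finset ι → Subgroup G} (hD_anti : Antitone D) {i : ι} {g : G}
    (hg : g ∈ D {i}) : IsCoherent D (cornerCube i g) := by
  have h : ∀ w : List ι, cubeDiffs w (cornerCube i g) =
      if ∀ j ∈ w, j = i then cornerCube i g else 1 := by
    intro w
    induction w with
    | nil => simp [cubeDiffs]
    | cons j w ih =>
      rw [cubeDiffs_cons, ih]
      by_cases hw : ∀ k ∈ w, k = i
      · rw [if_pos hw, cubeDiff_cornerCube]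
        by_cases hj : j = i
        · rw [if_pos hj, if_pos (List.forall_mem_cons.mpr ⟨hj, hw⟩ : ∀ k ∈ j :: w, k = i)]
        · rw [if_neg hj, if_neg fun h => hj (h j List.mem_cons_self)]
      · rw [if_neg hw, if_neg fun h => hw fun k hk => h k (List.mem_cons_of_mem j hk)]
        simp [cubeDiff]
  intro w U
  rw [h]
  split_ifs with hw
  · rw [cornerCube_apply]
    split_ifs
    · exact one_mem _
    · exact hD_anti (fun x hx => by simpa using hw x (List.mem_toFinset.mp hx)) hg
  · exact one_mem _

theorem cubeDiffs_mulSingle_empty (w : List ι) (g : G) :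
    cubeDiffs w (Pi.mulSingle ∅ g) = Pi.mulSingle ∅ g := by
  induction w with
  | nil => rfl
  | cons j w ih =>
    funext U
    simp [cubeDiffs_cons, ih, cubeDiff]

variable {n : ℕ} (K : Fin n → Subgroup G)

/-- Evaluated at `U`, this is the image in `G` of an element of the free product with the
factors indexed by `U` deleted. -/
def cubeHom : Monoid.CoprodI (fun i => ↥(K i)) →* (Finset (Fin n) → G) :=
  lift fun i => (cornerCube i).comp (K i).subtype

theorem cubeHom_apply_empty (x : Monoid.CoprodI (fun i => ↥(K i))) :
    cubeHom K x ∅ = lift (fun i => (K i).subtype) x := by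
  suffices (Pi.evalMonoidHom _ ∅).comp (cubeHom K) = lift fun i => (K i).subtype from
    DFunLike.congr_fun this x
  refine ext_hom _ _ fun i => MonoidHom.ext fun a => ?_
  simp [cubeHom, cornerCube_apply]

theorem cubeHom_piHat_apply {k : Fin n} {U : Finset (Fin n)} (hk : k ∈ U)
    (x : Monoid.CoprodI (fun i => ↥(K i))) : cubeHom K (piHat K k x) U = cubeHom K x U := by
  suffices (Pi.evalMonoidHom _ U).comp ((cubeHom K).comp (piHat K k)) =
      (Pi.evalMonoidHom _ U).comp (cubeHom K) from DFunLike.congr_fun this x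
  refine ext_hom _ _ fun i => MonoidHom.ext fun a => ?_
  by_cases h : i = k
  · subst h; simp [piHat, cubeHom, cornerCube_apply, hk]
  · simp [piHat, cubeHom, h]

theorem cubeHom_eq_mulSingle {x : Monoid.CoprodI (fun i => ↥(K i))} (hx : x ∈ cosmash K) :
    cubeHom K x = Pi.mulSingle ∅ (lift (fun i => (K i).subtype) x) := by
  funext U
  rcases U.eq_empty_or_nonempty with rfl | ⟨k, hk⟩
  · rw [cubeHom_apply_empty, Pi.mulSingle_eq_same]
  · have hxk : piHat K k x = 1 := Subgroup.mem_iInf.mp hx k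
    rw [← cubeHom_piHat_apply K hk, hxk, map_one,
      Pi.mulSingle_eq_of_ne (Finset.nonempty_iff_ne_empty.mp ⟨k, hk⟩), Pi.one_apply]

theorem isCoherent_cubeHom (hK : ∀ i, (K i).Normal) (x : Monoid.CoprodI (fun i => ↥(K i))) :
    IsCoherent (supportFiltration K) (cubeHom K x) := by
  induction x using Monoid.CoprodI.induction_on with
  | one => rw [map_one]; exact isCoherent_one
  | of i a =>
    rw [cubeHom, lift_of]
    exact isCoherent_cornerCube supportFiltration_anti (le_supportFiltration_singleton i a.2)
  | mul x y hx hy =>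
    rw [map_mul]
    exact hx.mul supportFiltration_anti (commutator_supportFiltration_le hK) hy

theorem higgins_le_supportFiltration_univ (hK : ∀ i, (K i).Normal) :
    higgins K ≤ supportFiltration K Finset.univ := by
  rintro _ ⟨x, hx, rfl⟩
  have h := isCoherent_cubeHom K hK x (List.finRange n) ∅
  rwa [cubeHom_eq_mulSingle K hx, cubeDiffs_mulSingle_empty, Pi.mulSingle_eq_same,
    List.toFinset_finRange] at h

theorem listCommutator_le_higgins {w : List (Fin n)} (hw : ∀ k, k ∈ w) :
    listCommutator K w ≤ higgins K := by
  let F : Fin n → Subgroup (Monoid.CoprodI (fun i => ↥(K i))) := fun i => (of (i := i)).range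
  have hF : listCommutator K w = (listCommutator F w).map (lift fun i => (K i).subtype) := by
    simp [F, map_listCommutator, MonoidHom.map_range]
  rw [hF]
  refine Subgroup.map_mono (le_iInf fun k => ?_)
  rw [← Subgroup.map_eq_bot_iff, map_listCommutator]
  refine listCommutator_eq_bot _ ?_ (hw k)
  rw [MonoidHom.map_range, MonoidHom.range_eq_bot_iff]
  exact MonoidHom.ext fun a => by simp [piHat]

end FreeProduct

end HigginsCommutator

open HigginsCommutator

theorem higgins_eq_iSup_nested_commutators_general {G : Type*} [Group G] {n : ℕ}
    (K : Fin n → Subgroup G) (hK : ∀ i, (K i).Normal) :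
    higgins K = ⨆ σ : Equiv.Perm (Fin n), nestedCommutator (fun i => K (σ i)) := by
  refine le_antisymm ?_ (iSup_le fun σ => ?_)
  · exact (higgins_le_supportFiltration_univ K hK).trans (supportFiltration_univ_le hK)
  · rw [← listCommutator_ofFn]
    exact listCommutator_le_higgins K fun k => List.mem_ofFn.mpr ⟨σ.symm k, σ.apply_symm_apply k⟩

/-- For `n ≥ 3` and normal subgroups `K₁, …, Kₙ` of `G`, the `n`-fold Higgins commutator
decomposes as the join, over all permutations `σ` of `Fin n`, of the left-nested binary
commutator subgroups `⁅⋯⁅⁅K_{σ(1)}, K_{σ(2)}⁆, K_{σ(3)}⁆, …, K_{σ(n)}⁆`. -/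
theorem higgins_eq_iSup_nested_commutators {G : Type*} [Group G] {n : ℕ} (hn : 3 ≤ n)
    (K : Fin n → Subgroup G) (hK : ∀ i, (K i).Normal) :
    higgins K = ⨆ σ : Equiv.Perm (Fin n), nestedCommutator (fun i => K (σ i)) :=
  higgins_eq_iSup_nested_commutators_general K hK
end
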